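/- arXiv:1409.5093 — 9 statements merged into one kernel-verified Lean document; each statement's English description precedes it below -/
import Mathlib

section
/- No nonzero vector of S = T^⊥ is a product vector; that is, S is a completely entangled subspace. -/
/-!
The slice sums `⟪u n, v⟫ = ∑_{Σ i_r = n} v i` of a product vector `v i = ∏ r, x r (i r)` are
the coefficients of the polynomial `∏ r, (∑ j, x r j * X ^ j)`. If `v ⊥ T` they all vanish, so
in the domain `ℂ[X]` one factor is zero, i.e. some `x r = 0`, and then `v = 0`.
-/

open Finset Polynomial

theorem Polynomial.coeff_prod_ofFn {ι R : Type*} [Fintype ι] [DecidableEq ι] [CommSemiring R]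
    [DecidableEq R] (d : ι → ℕ) (x : ∀ r, Fin (d r) → R) (n : ℕ) :
    (∏ r, ofFn (d r) (x r)).coeff n =
      ∑ i : ∀ r, Fin (d r) with ∑ r, (i r : ℕ) = n, ∏ r, x r (i r) := by
  have hmonomial (i : ∀ r, Fin (d r)) :
      ∏ r, monomial (i r : ℕ) (x r (i r)) = monomial (∑ r, (i r : ℕ)) (∏ r, x r (i r)) := by
    simp only [← C_mul_X_pow_eq_monomial, prod_mul_distrib, ← map_prod, prod_pow_eq_pow_sum]
  simp only [ofFn_eq_sum_monomial, prod_univ_sum, Fintype.piFinset_univ, hmonomial,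
    finsetSum_coeff, coeff_monomial, sum_filter]

theorem EuclideanSpace.inner_sum_single_one_left {ι 𝕜 : Type*} [RCLike 𝕜] [Fintype ι]
    [DecidableEq ι] (s : Finset ι) (v : EuclideanSpace 𝕜 ι) :
    inner 𝕜 (∑ i ∈ s, EuclideanSpace.single i (1 : 𝕜)) v = ∑ i ∈ s, v i := by
  simp [sum_inner, EuclideanSpace.inner_single_left]

theorem sum_val_le_sum_sub_one {ι : Type*} [Fintype ι] {d : ι → ℕ} (i : ∀ r, Fin (d r)) :
    ∑ r, (i r : ℕ) ≤ ∑ r, (d r - 1) :=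
  sum_le_sum fun r _ => Nat.le_sub_one_of_lt (i r).isLt

theorem stmt_2_general (k : ℕ) (d : Fin k → ℕ)
    (u : ℕ → EuclideanSpace ℂ (∀ r, Fin (d r)))
    (hu : ∀ n, u n = ∑ i ∈ Finset.univ.filter
        (fun i : ∀ r, Fin (d r) => ∑ r, (i r : ℕ) = n),
      EuclideanSpace.single i (1 : ℂ)) :
    ∀ v ∈ (Submodule.span ℂ (u '' Set.Iic (∑ r, (d r - 1))))ᗮ, v ≠ 0 →
      ¬ ∃ x : ∀ r, Fin (d r) → ℂ, ∀ i : ∀ r, Fin (d r), v i = ∏ r, x r (i r) := by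
  classical
  rintro v hv hv0 ⟨x, hx⟩
  have hslice (n : ℕ) : ∑ i : ∀ r, Fin (d r) with ∑ r, (i r : ℕ) = n, v i = 0 := by
    by_cases hn : n ≤ ∑ r, (d r - 1)
    · rw [← EuclideanSpace.inner_sum_single_one_left, ← hu]
      exact (Submodule.mem_orthogonal _ v).1 hv _ (Submodule.subset_span ⟨n, hn, rfl⟩)
    · refine sum_eq_zero fun i hi => absurd ?_ hn
      exact (mem_filter.1 hi).2 ▸ sum_val_le_sum_sub_one i
  have hprod : ∏ r, ofFn (d r) (x r) = 0 := by
    ext n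
    simpa [coeff_prod_ofFn, ← hx] using hslice n
  obtain ⟨r, -, hr⟩ := prod_eq_zero_iff.1 hprod
  have hxr : x r = 0 := injective_ofFn _ (hr.trans (map_zero _).symm)
  refine hv0 (PiLp.ext fun i => ?_)
  rw [hx, PiLp.zero_apply]
  exact prod_eq_zero (mem_univ r) (by simp [hxr])

/-- `S = Tᗮ` is completely entangled: it contains no nonzero product vector. -/
theorem stmt_2 (k : ℕ) (hk : 2 ≤ k) (d : Fin k → ℕ) (hd : ∀ r, 2 ≤ d r)
    (u : ℕ → EuclideanSpace ℂ (∀ r, Fin (d r)))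
    (hu : ∀ n, u n = ∑ i ∈ Finset.univ.filter
        (fun i : ∀ r, Fin (d r) => ∑ r, (i r : ℕ) = n),
      EuclideanSpace.single i (1 : ℂ)) :
    ∀ v ∈ (Submodule.span ℂ (u '' Set.Iic (∑ r, (d r - 1))))ᗮ, v ≠ 0 →
      ¬ ∃ x : ∀ r, Fin (d r) → ℂ, ∀ i : ∀ r, Fin (d r), v i = ∏ r, x r (i r) :=
  stmt_2_general k d u hu
end

section
/- In the bipartite case, the span of the vectors w_{x,y} (0 ≤ x ≤ d_1−2, 0 ≤ y ≤ d_2−2) equals T^⊥; that is, Johnston's subspace S_J coincides with the completely entangled subspace S = S_B of Parthasarathy and Bhat. -/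
/-!
Each `w x y` is the difference of two basis vectors on the same antidiagonal, so it is orthogonal
to every `u n`. Conversely, a vector orthogonal to all `w x y` takes the same value at `(x, y + 1)`
and `(x + 1, y)`, hence is constant along antidiagonals, i.e. lies in `T`. So `(span w)ᗮ ≤ T`, and
taking orthogonal complements in finite dimension gives `Tᗮ ≤ span w`.
-/

open Submodule

theorem apply_eq_apply_of_val_add_eq {α : Type*} {m k : ℕ} {f : Fin m × Fin k → α}
    (hf : ∀ p q : Fin m × Fin k, (q.1 : ℕ) = p.1 + 1 → (p.2 : ℕ) = q.2 + 1 → f p = f q)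
    {p q : Fin m × Fin k} (hpq : (p.1 : ℕ) + p.2 = q.1 + q.2) : f p = f q := by
  wlog hle : (p.1 : ℕ) ≤ q.1 generalizing p q
  · exact (this hpq.symm (by omega)).symm
  obtain ⟨j, hj⟩ := Nat.exists_eq_add_of_le hle
  induction j generalizing p with
  | zero => congr; ext <;> omega
  | succ j ih =>
    have := q.2.isLt
    let p' : Fin m × Fin k := (⟨p.1 + 1, by omega⟩, ⟨p.2 - 1, by omega⟩)
    calc f p = f p' := hf p p' rfl (by simp [p']; omega)
      _ = f q := ih (by simp [p']; omega) (by simp [p']; omega) (by simp [p']; omega)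

section Antidiagonal

variable {d₁ d₂ : ℕ}

variable (d₁ d₂) in
noncomputable def antidiagonalVector (n : ℕ) : EuclideanSpace ℂ (Fin d₁ × Fin d₂) :=
  ∑ p ∈ Finset.univ.filter (fun p : Fin d₁ × Fin d₂ => (p.1 : ℕ) + (p.2 : ℕ) = n),
    EuclideanSpace.single p (1 : ℂ)

theorem antidiagonalVector_apply (n : ℕ) (p : Fin d₁ × Fin d₂) :
    antidiagonalVector d₁ d₂ n p = if (p.1 : ℕ) + p.2 = n then 1 else 0 := by
  simp [antidiagonalVector, WithLp.ofLp_sum, Finset.sum_apply]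

theorem mem_span_antidiagonalVector {v : EuclideanSpace ℂ (Fin d₁ × Fin d₂)}
    (hv : ∀ p q : Fin d₁ × Fin d₂, (p.1 : ℕ) + p.2 = q.1 + q.2 → v p = v q) :
    v ∈ span ℂ (antidiagonalVector d₁ d₂ '' Set.Iic (d₁ + d₂ - 2)) := by
  classical
  let φ : ℕ → ℂ := fun n =>
    if h : ∃ p : Fin d₁ × Fin d₂, (p.1 : ℕ) + p.2 = n then v h.choose else 0
  have hφ : ∀ p : Fin d₁ × Fin d₂, φ (p.1 + p.2) = v p := fun p ↦ by
    have h : ∃ q : Fin d₁ × Fin d₂, (q.1 : ℕ) + q.2 = p.1 + p.2 := ⟨p, rfl⟩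
    simp only [φ, dif_pos h]
    exact hv _ _ h.choose_spec
  have hv_eq : v = ∑ n ∈ Finset.range (d₁ + d₂ - 1), φ n • antidiagonalVector d₁ d₂ n := by
    ext p
    have := p.1.isLt
    have := p.2.isLt
    simp only [WithLp.ofLp_sum, WithLp.ofLp_smul, Finset.sum_apply, Pi.smul_apply,
      antidiagonalVector_apply, smul_eq_mul, mul_ite, mul_one, mul_zero, Finset.sum_ite_eq]
    rw [if_pos (Finset.mem_range.2 (by omega)), hφ]
  rw [hv_eq]
  refine sum_mem fun n hn ↦ smul_mem _ _ (subset_span ⟨n, Set.mem_Iic.2 ?_, rfl⟩)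
  rw [Finset.mem_range] at hn
  omega

end Antidiagonal

/-- Linking theorem (bipartite case): Johnston's subspace
`S_J = span{w_{x,y}}` equals `S = Tᗮ`, the completely entangled subspace of
Parthasarathy and Bhat. -/
theorem stmt_3 (d₁ d₂ : ℕ)
    (u : ℕ → EuclideanSpace ℂ (Fin d₁ × Fin d₂))
    (hu : ∀ n, u n = ∑ p ∈ Finset.univ.filter
        (fun p : Fin d₁ × Fin d₂ => (p.1 : ℕ) + (p.2 : ℕ) = n),
      EuclideanSpace.single p (1 : ℂ))
    (w : Fin (d₁ - 1) → Fin (d₂ - 1) → EuclideanSpace ℂ (Fin d₁ × Fin d₂))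
    (hw : ∀ x y, w x y =
      EuclideanSpace.single
        (⟨(x : ℕ), lt_of_lt_of_le x.isLt (Nat.sub_le _ _)⟩,
         ⟨(y : ℕ) + 1, by have := y.isLt; omega⟩) (1 : ℂ)
      - EuclideanSpace.single
        (⟨(x : ℕ) + 1, by have := x.isLt; omega⟩,
         ⟨(y : ℕ), lt_of_lt_of_le y.isLt (Nat.sub_le _ _)⟩) (1 : ℂ)) :
    Submodule.span ℂ {v | ∃ x y, v = w x y} =
      (Submodule.span ℂ (u '' Set.Iic (d₁ + d₂ - 2)))ᗮ := by
  obtain rfl : u = antidiagonalVector d₁ d₂ := funext hu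
  set W := {v | ∃ x y, v = w x y}
  set T := span ℂ (antidiagonalVector d₁ d₂ '' Set.Iic (d₁ + d₂ - 2))
  have inner_w_left : ∀ x y v, inner ℂ (w x y) v =
      v (⟨x, by omega⟩, ⟨y + 1, by omega⟩) - v (⟨x + 1, by omega⟩, ⟨y, by omega⟩) := by
    intro x y v
    simp [hw, EuclideanSpace.inner_single_left]
  have span_W_le : span ℂ W ≤ Tᗮ := by
    refine isOrtho_span.mpr ?_
    rintro _ ⟨x, y, rfl⟩ _ ⟨n, -, rfl⟩
    simp only [inner_w_left, antidiagonalVector_apply, add_assoc, add_comm 1, sub_self]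
  have orthogonal_W_le : (span ℂ W)ᗮ ≤ T := by
    refine fun v hv ↦ mem_span_antidiagonalVector fun _ _ ↦ apply_eq_apply_of_val_add_eq ?_
    intro p q hq₁ hp₂
    have := q.1.isLt
    have := p.2.isLt
    let x : Fin (d₁ - 1) := ⟨p.1, by omega⟩
    let y : Fin (d₂ - 1) := ⟨q.2, by omega⟩
    have h := inner_right_of_mem_orthogonal (subset_span (s := W) ⟨x, y, rfl⟩) hv
    rw [inner_w_left, sub_eq_zero] at h
    convert h using 2 <;> ext <;> simp [x, y] <;> omega
  refine le_antisymm span_W_le ?_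
  calc Tᗮ ≤ (span ℂ W)ᗮᗮ := orthogonal_le orthogonal_W_le
    _ = span ℂ W := orthogonal_orthogonal _
end

section
/- Let d ≥ 3 and 1 ≤ r ≤ d−2. Let Z_r^1 = Z ∩ span{y_0, …, y_r}. Suppose (z_s)_{s=0}^{r−1} is an orthonormal basis of Z_r^1 such that the coefficient of y_0 in z_0 is nonzero and the coefficient of y_0 in z_s is zero for 1 ≤ s ≤ r−1. Then this family extends to an orthonormal basis (z_s)_{s=0}^{d−2} of Z such that the coefficient of y_0 in z_r is nonzero and the coefficient of y_0 in z_s is zero for every s ∉ {0, r} with 0 ≤ s ≤ d−2. -/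
/-!
The vectors of `Z` orthogonal to `Z_r¹` are constant on the block `{0, …, r}` and sum to zero.
One of them is the centred indicator of the block, `d·𝟙_{≤ r} - (r + 1)·𝟙`; the others are chosen
to vanish on the block, which forces their `y_0`-coefficient to be zero: the Helmert vectors
`y_{r+1} + ⋯ + y_i - (i - r) y_{i+1}` for `r < i ≤ d - 2`. Every orthogonality relation in the
resulting family is an instance of one principle: if `x` sums to zero and `y` is constant on the
support of `x`, then `⟪x, y⟫ = 0`. Normalising gives `d - 1` orthonormal vectors in `Z`, which has
dimension `d - 1`.
-/

open Finset

variable {𝕜 ι : Type*} [RCLike 𝕜]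

theorem orthonormal_inv_norm_smul {E : Type*} [NormedAddCommGroup E] [InnerProductSpace 𝕜 E]
    {v : ι → E} (hv : ∀ i, v i ≠ 0) (horth : Pairwise fun i j => inner 𝕜 (v i) (v j) = 0) :
    Orthonormal 𝕜 fun i => (‖v i‖⁻¹ : 𝕜) • v i :=
  ⟨fun i => norm_smul_inv_norm (hv i), fun _ _ hij => by
    simp [inner_smul_left, inner_smul_right, horth hij]⟩

namespace EuclideanSpace

theorem apply_eq_zero_of_mem_span_single [DecidableEq ι] {p : ι → Prop} {x : EuclideanSpace 𝕜 ι}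
    (hx : x ∈ Submodule.span 𝕜 {v | ∃ s, p s ∧ v = EuclideanSpace.single s (1 : 𝕜)})
    {t : ι} (ht : ¬ p t) : x t = 0 := by
  refine (Submodule.span_le (p := LinearMap.ker (EuclideanSpace.projₗ t)) |>.mpr ?_ hx :)
  rintro _ ⟨s, hs, rfl⟩
  simp only [SetLike.mem_coe, LinearMap.mem_ker, PiLp.projₗ_apply, PiLp.single_apply,
    ite_eq_right_iff]
  rintro rfl
  exact absurd hs ht

variable [Fintype ι]

theorem inner_eq_zero_of_sum_eq_zero {x y : EuclideanSpace 𝕜 ι} {S : Finset ι} {c : 𝕜}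
    (hx : ∀ t ∉ S, x t = 0) (hy : ∀ t ∈ S, y t = c) (hsum : ∑ t, x t = 0) :
    inner 𝕜 x y = 0 := by
  have hterm : ∀ t, y t * starRingEnd 𝕜 (x t) = c * starRingEnd 𝕜 (x t) := by
    intro t
    by_cases ht : t ∈ S
    · rw [hy t ht]
    · simp [hx t ht]
  simp only [PiLp.inner_apply, RCLike.inner_apply, hterm, ← Finset.mul_sum, ← map_sum, hsum,
    map_zero, mul_zero]

theorem finrank_of_mem_iff_sum_eq_zero [Nonempty ι] {Z : Submodule 𝕜 (EuclideanSpace 𝕜 ι)}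
    (hZ : ∀ f : EuclideanSpace 𝕜 ι, f ∈ Z ↔ ∑ s, f s = 0) :
    Module.finrank 𝕜 Z = Fintype.card ι - 1 := by
  set one : EuclideanSpace 𝕜 ι := WithLp.toLp 2 fun _ => 1
  have hone : one ≠ 0 := fun h => by
    simpa [one] using congrArg (· (Classical.arbitrary ι)) h
  obtain rfl : Z = (𝕜 ∙ one)ᗮ := by
    ext f
    simp [Submodule.mem_orthogonal_singleton_iff_inner_right, hZ, one, PiLp.inner_apply]
  refine Submodule.finrank_add_finrank_orthogonal' ?_
  rw [finrank_span_singleton hone, finrank_euclideanSpace]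
  have := Fintype.card_pos (α := ι)
  omega

end EuclideanSpace

section helmertVec

variable [DecidableEq ι]

noncomputable def helmertVec (T : Finset ι) (p : ι) : EuclideanSpace 𝕜 ι :=
  WithLp.toLp 2 fun t => (if t ∈ T then 1 else 0) - if t = p then (#T : 𝕜) else 0

theorem sum_helmertVec [Fintype ι] (T : Finset ι) (p : ι) :
    ∑ t, (helmertVec T p : EuclideanSpace 𝕜 ι) t = 0 := by
  simp [helmertVec, Finset.sum_sub_distrib, Finset.sum_ite_mem]

variable {T : Finset ι} {p : ι}

theorem helmertVec_apply_of_notMem {t : ι} (ht : t ∉ T) (htp : t ≠ p) :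
    (helmertVec T p : EuclideanSpace 𝕜 ι) t = 0 := by
  simp [helmertVec, ht, htp]

theorem helmertVec_apply_of_mem (hp : p ∉ T) {t : ι} (ht : t ∈ T) :
    (helmertVec T p : EuclideanSpace 𝕜 ι) t = 1 := by
  simp [helmertVec, ht, show t ≠ p by rintro rfl; exact hp ht]

theorem helmertVec_ne_zero (hp : p ∉ T) {t : ι} (ht : t ∈ T) :
    (helmertVec T p : EuclideanSpace 𝕜 ι) ≠ 0 := fun h => by
  simpa [h] using helmertVec_apply_of_mem (𝕜 := 𝕜) hp ht

end helmertVec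

section centeredIndicator

variable [Fintype ι] [DecidableEq ι]

noncomputable def centeredIndicator (S : Finset ι) : EuclideanSpace 𝕜 ι :=
  WithLp.toLp 2 fun t => (if t ∈ S then (Fintype.card ι : 𝕜) else 0) - #S

theorem sum_centeredIndicator (S : Finset ι) :
    ∑ t, (centeredIndicator S : EuclideanSpace 𝕜 ι) t = 0 := by
  simp [centeredIndicator, Finset.sum_sub_distrib, Finset.sum_ite_mem, mul_comm]

variable {S : Finset ι}

theorem centeredIndicator_apply_of_mem {t : ι} (ht : t ∈ S) :
    (centeredIndicator S : EuclideanSpace 𝕜 ι) t = Fintype.card ι - #S := by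
  simp [centeredIndicator, ht]

theorem centeredIndicator_apply_of_notMem {t : ι} (ht : t ∉ S) :
    (centeredIndicator S : EuclideanSpace 𝕜 ι) t = -#S := by
  simp [centeredIndicator, ht]

theorem centeredIndicator_apply_ne_zero (hS : S ≠ univ) {t : ι} (ht : t ∈ S) :
    (centeredIndicator S : EuclideanSpace 𝕜 ι) t ≠ 0 := by
  rw [centeredIndicator_apply_of_mem ht, sub_ne_zero, Ne, Nat.cast_inj]
  exact ((Finset.card_lt_iff_ne_univ S).mpr hS).ne'

end centeredIndicator

section orthogonality

variable [Fintype ι] [DecidableEq ι] {S T T' : Finset ι} {p p' : ι} {x : EuclideanSpace 𝕜 ι}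

theorem inner_centeredIndicator_eq_zero (hx : ∀ t ∉ S, x t = 0) (hsum : ∑ t, x t = 0) :
    inner 𝕜 x (centeredIndicator S) = 0 :=
  EuclideanSpace.inner_eq_zero_of_sum_eq_zero hx (fun _ => centeredIndicator_apply_of_mem) hsum

theorem inner_helmertVec_eq_zero (hx : ∀ t ∉ S, x t = 0) (hsum : ∑ t, x t = 0)
    (hT : Disjoint S T) (hp : p ∉ S) : inner 𝕜 x (helmertVec T p) = 0 :=
  EuclideanSpace.inner_eq_zero_of_sum_eq_zero hx (fun _ ht =>
    helmertVec_apply_of_notMem (disjoint_left.mp hT ht) (by rintro rfl; exact hp ht)) hsum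

theorem inner_helmertVec_centeredIndicator (hT : Disjoint S T) (hp : p ∉ S) :
    inner 𝕜 (helmertVec T p : EuclideanSpace 𝕜 ι) (centeredIndicator S) = 0 :=
  EuclideanSpace.inner_eq_zero_of_sum_eq_zero (S := Sᶜ)
    (fun t ht => helmertVec_apply_of_notMem (disjoint_left.mp hT (by simpa using ht))
      (by rintro rfl; exact hp (by simpa using ht)))
    (fun _ ht => centeredIndicator_apply_of_notMem (by simpa using ht)) (sum_helmertVec T p)

theorem inner_helmertVec_helmertVec (hT : insert p' T' ⊆ T) (hp : p ∉ T) :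
    inner 𝕜 (helmertVec T' p' : EuclideanSpace 𝕜 ι) (helmertVec T p) = 0 :=
  EuclideanSpace.inner_eq_zero_of_sum_eq_zero
    (fun t ht => helmertVec_apply_of_notMem (fun h => ht (hT (mem_insert_of_mem h)))
      (by rintro rfl; exact ht (hT (mem_insert_self _ _))))
    (fun _ => helmertVec_apply_of_mem hp) (sum_helmertVec T' p')

end orthogonality

section helmertExtension

variable {d r : ℕ} (z : Fin r → EuclideanSpace 𝕜 (Fin d))

noncomputable def helmertExtension (i : Fin (d - 1)) : EuclideanSpace 𝕜 (Fin d) :=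
  if h : (i : ℕ) < r then z ⟨i, h⟩
  else if (i : ℕ) = r then centeredIndicator {t : Fin d | (t : ℕ) ≤ r}
  else helmertVec {t : Fin d | r < (t : ℕ) ∧ (t : ℕ) ≤ i} ⟨i + 1, by omega⟩

variable {z}

theorem helmertExtension_of_lt {i : Fin (d - 1)} (h : (i : ℕ) < r) :
    helmertExtension z i = z ⟨i, h⟩ :=
  dif_pos h

theorem helmertExtension_of_eq {i : Fin (d - 1)} (h : (i : ℕ) = r) :
    helmertExtension z i = centeredIndicator {t : Fin d | (t : ℕ) ≤ r} := by
  rw [helmertExtension, dif_neg h.not_lt, if_pos h]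

theorem helmertExtension_of_gt {i : Fin (d - 1)} (h : r < (i : ℕ)) :
    helmertExtension z i =
      helmertVec {t : Fin d | r < (t : ℕ) ∧ (t : ℕ) ≤ i} ⟨i + 1, by omega⟩ := by
  rw [helmertExtension, dif_neg (by omega), if_neg h.ne']

theorem sum_helmertExtension (hz : ∀ s, ∑ t, z s t = 0) (i : Fin (d - 1)) :
    ∑ t, helmertExtension z i t = 0 := by
  rcases lt_trichotomy (i : ℕ) r with h | h | h
  · rw [helmertExtension_of_lt h]; exact hz _
  · rw [helmertExtension_of_eq h]; exact sum_centeredIndicator _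
  · rw [helmertExtension_of_gt h]; exact sum_helmertVec _ _

theorem helmertExtension_apply_ne_zero_of_eq {i : Fin (d - 1)} (h : (i : ℕ) = r) {t : Fin d}
    (ht : (t : ℕ) ≤ r) : helmertExtension z i t ≠ 0 := by
  rw [helmertExtension_of_eq h]
  refine centeredIndicator_apply_ne_zero (fun hS => ?_) (by simpa using ht)
  simpa using Finset.ext_iff.mp hS ⟨r + 1, by omega⟩

theorem helmertExtension_apply_eq_zero_of_gt {i : Fin (d - 1)} (h : r < (i : ℕ)) {t : Fin d}
    (ht : (t : ℕ) ≤ r) : helmertExtension z i t = 0 := by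
  rw [helmertExtension_of_gt h]
  exact helmertVec_apply_of_notMem (by simp; omega) (by simp [Fin.ext_iff]; omega)

theorem helmertExtension_ne_zero (hz : Orthonormal 𝕜 z) (i : Fin (d - 1)) :
    helmertExtension z i ≠ 0 := by
  rcases lt_trichotomy (i : ℕ) r with h | h | h
  · rw [helmertExtension_of_lt h]
    exact hz.ne_zero _
  · intro h0
    exact helmertExtension_apply_ne_zero_of_eq h (t := ⟨0, by omega⟩) (Nat.zero_le r)
      (by rw [h0]; rfl)
  · rw [helmertExtension_of_gt h]
    exact helmertVec_ne_zero (by simp) (t := ⟨r + 1, by omega⟩) (by simp; omega)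

theorem inner_helmertExtension_of_lt (hz : Orthonormal 𝕜 z) (hsum : ∀ s, ∑ t, z s t = 0)
    (hsupp : ∀ s (t : Fin d), r < (t : ℕ) → z s t = 0) {i j : Fin (d - 1)} (hij : i < j) :
    inner 𝕜 (helmertExtension z i) (helmertExtension z j) = 0 := by
  have hzS : ∀ s, ∀ t ∉ ({t : Fin d | (t : ℕ) ≤ r} : Finset (Fin d)), z s t = 0 := fun s t ht =>
    hsupp s t (by simpa using ht)
  rcases lt_trichotomy (i : ℕ) r with hi | hi | hi
  · rw [helmertExtension_of_lt hi]
    rcases lt_trichotomy (j : ℕ) r with hj | hj | hj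
    · rw [helmertExtension_of_lt hj]
      exact hz.2 (by simp [Fin.ext_iff]; omega)
    · rw [helmertExtension_of_eq hj]
      exact inner_centeredIndicator_eq_zero (hzS _) (hsum _)
    · rw [helmertExtension_of_gt hj]
      exact inner_helmertVec_eq_zero (hzS _) (hsum _)
        (disjoint_left.mpr fun t => by simp; omega) (by simp; omega)
  · rw [helmertExtension_of_eq hi, helmertExtension_of_gt (by omega), inner_eq_zero_symm]
    exact inner_helmertVec_centeredIndicator (disjoint_left.mpr fun t => by simp; omega)
      (by simp; omega)
  · rw [helmertExtension_of_gt hi, helmertExtension_of_gt (by omega)]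
    exact inner_helmertVec_helmertVec (fun t => by simp [Fin.ext_iff]; omega) (by simp)

theorem pairwise_inner_helmertExtension (hz : Orthonormal 𝕜 z) (hsum : ∀ s, ∑ t, z s t = 0)
    (hsupp : ∀ s (t : Fin d), r < (t : ℕ) → z s t = 0) :
    Pairwise fun i j => inner 𝕜 (helmertExtension z i) (helmertExtension z j) = 0 := by
  intro i j hij
  rcases hij.lt_or_gt with h | h
  · exact inner_helmertExtension_of_lt hz hsum hsupp h
  · exact inner_eq_zero_symm.mp (inner_helmertExtension_of_lt hz hsum hsupp h)

end helmertExtension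

/-- Extension technique: an orthonormal basis of `Z_r¹ = Z ∩ span{y_0,…,y_r}` in which the
coefficient of `y_0` is nonzero only in `z_0` extends to an orthonormal basis of `Z` in which
the coefficient of `y_0` is nonzero exactly in `z_0` and `z_r`. -/
theorem stmt_6 (d : ℕ) (hd : 3 ≤ d) (r : ℕ) (hr2 : r ≤ d - 2)
    (Z : Submodule ℂ (EuclideanSpace ℂ (Fin d)))
    (hZ : ∀ f : EuclideanSpace ℂ (Fin d), f ∈ Z ↔ ∑ s, f s = 0)
    (Z1 : Submodule ℂ (EuclideanSpace ℂ (Fin d)))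
    (hZ1 : Z1 = Z ⊓ Submodule.span ℂ
      {v | ∃ s : Fin d, (s : ℕ) ≤ r ∧ v = EuclideanSpace.single s (1 : ℂ)})
    (z : Fin r → EuclideanSpace ℂ (Fin d))
    (hzo : Orthonormal ℂ z)
    (hzspan : Submodule.span ℂ (Set.range z) = Z1)
    (hzrest : ∀ s : Fin r, 1 ≤ (s : ℕ) →
      (inner ℂ (EuclideanSpace.single (⟨0, by omega⟩ : Fin d) (1 : ℂ)) (z s) : ℂ) = 0) :
    ∃ z' : Fin (d - 1) → EuclideanSpace ℂ (Fin d),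
      Orthonormal ℂ z' ∧
      Submodule.span ℂ (Set.range z') = Z ∧
      (∀ s : Fin r, z' (Fin.castLE (by omega) s) = z s) ∧
      (inner ℂ (EuclideanSpace.single (⟨0, by omega⟩ : Fin d) (1 : ℂ))
        (z' ⟨r, by omega⟩) : ℂ) ≠ 0 ∧
      (∀ s : Fin (d - 1), (s : ℕ) ≠ 0 → (s : ℕ) ≠ r →
        (inner ℂ (EuclideanSpace.single (⟨0, by omega⟩ : Fin d) (1 : ℂ)) (z' s) : ℂ) = 0) := by
  subst hZ1
  have hzZ1 := fun s => Submodule.span_le.mp hzspan.le (Set.mem_range_self s)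
  have hzsum : ∀ s, ∑ t, z s t = 0 := fun s => (hZ _).1 (hzZ1 s).1
  have hzsupp : ∀ s (t : Fin d), r < (t : ℕ) → z s t = 0 := fun s _ ht =>
    EuclideanSpace.apply_eq_zero_of_mem_span_single (hzZ1 s).2 ht.not_ge
  have hz' := orthonormal_inv_norm_smul (helmertExtension_ne_zero hzo)
    (pairwise_inner_helmertExtension hzo hzsum hzsupp)
  refine ⟨_, hz', ?_, fun s => ?_, ?_, fun s hs0 hsr => ?_⟩
  · refine Submodule.eq_of_le_of_finrank_le (Submodule.span_le.mpr ?_) ?_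
    · rintro _ ⟨i, rfl⟩
      exact Z.smul_mem _ ((hZ _).2 (sum_helmertExtension hzsum i))
    · have : Nonempty (Fin d) := ⟨⟨0, by omega⟩⟩
      rw [EuclideanSpace.finrank_of_mem_iff_sum_eq_zero hZ,
        finrank_span_eq_card hz'.linearIndependent]
      simp
  · simp [helmertExtension_of_lt (show ((Fin.castLE _ s : Fin (d - 1)) : ℕ) < r from s.2),
      hzo.1]
  · simp only [EuclideanSpace.inner_single_left, map_one, one_mul, PiLp.smul_apply, smul_eq_mul]
    exact mul_ne_zero (by simpa using helmertExtension_ne_zero hzo _)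
      (helmertExtension_apply_ne_zero_of_eq rfl (Nat.zero_le r))
  · simp only [EuclideanSpace.inner_single_left, map_one, one_mul, PiLp.smul_apply, smul_eq_mul]
    rcases hsr.lt_or_gt with h | h
    · rw [helmertExtension_of_lt h]
      refine mul_eq_zero_of_right _ ?_
      simpa [EuclideanSpace.inner_single_left] using
        hzrest ⟨s, h⟩ (Nat.one_le_iff_ne_zero.mpr hs0)
    · rw [helmertExtension_apply_eq_zero_of_gt h (Nat.zero_le r), mul_zero]
end

section
/- Let 1 ≤ j ≠ j' ≤ k. There exists an orthonormal basis C of S such that: (a) ζ_0 := (e_{δ_{j'}} − e_{δ_j})/√2 belongs to C; (b) if k ≥ 3, then ζ_2 := [(k−2)(e_{δ_j} + e_{δ_{j'}}) − 2 ∑_{t ≠ j, j'} e_{δ_t}] / √(2k(k−2)) also belongs to C; and (c) every element of C other than ζ_0 (and ζ_2 when k ≥ 3) is orthogonal to both e_{δ_j} and e_{δ_{j'}}. -/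
/-!
Write `e_t = e_{δ_t}` and `s = ∑_t e_t = u_1`. The vectors `a = e_{j'} - e_j` and
`b = k (e_j + e_{j'}) - 2 s` are orthogonal, and they lie in `S` because `⟪u_n, e_t⟫` does not
depend on `t`; normalised, they are `ζ₀` and `ζ₂` (and `b = 0` when `k = 2`). Extend them to an
orthonormal basis of `S`. Any other basis vector is orthogonal to `a` and `b`, and to `s` because it
lies in `S`. So it is orthogonal to `e_j` and `e_{j'}`, since `2k e_j = b + 2s - k a` and
`2k e_{j'} = b + 2s + k a`.
-/

open Finset
open scoped InnerProductSpace

section InnerProductSpace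

variable {𝕜 E : Type*} [RCLike 𝕜] [NormedAddCommGroup E] [InnerProductSpace 𝕜 E]

theorem norm_eq_sqrt_of_inner_self_eq {x : E} {r : ℝ} (h : ⟪x, x⟫_𝕜 = r) : ‖x‖ = √r := by
  rw [norm_eq_sqrt_re_inner (𝕜 := 𝕜), h, RCLike.ofReal_re]

theorem inner_eq_zero_of_inner_smul_eq_zero {c : 𝕜} (hc : c ≠ 0) {x y : E}
    (h : ⟪c • x, y⟫_𝕜 = 0) : ⟪x, y⟫_𝕜 = 0 := by
  simpa [inner_smul_left, hc] using h

theorem Submodule.mem_orthogonal_span_iff {X : Set E} {v : E} :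
    v ∈ (span 𝕜 X)ᗮ ↔ ∀ x ∈ X, ⟪x, v⟫_𝕜 = 0 := by
  rw [← span_singleton_le_iff_mem, ← isOrtho_iff_le, isOrtho_span]
  simpa using forall₂_congr fun _ _ => inner_eq_zero_symm

theorem orthonormal_setOf_eq_or_and_eq {x y : E} {p : Prop} (hx : ‖x‖ = 1)
    (hy : p → ‖y‖ = 1) (hxy : ⟪x, y⟫_𝕜 = 0) :
    Orthonormal 𝕜 ((↑) : {v | v = x ∨ (p ∧ v = y)} → E) := by
  classical
  have hne : x ≠ y := by
    rintro rfl
    simp [hx] at hxy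
  rw [orthonormal_subtype_iff_ite]
  rintro v (rfl | ⟨hp, rfl⟩) w (rfl | ⟨-, rfl⟩)
  · simp [hx]
  · simp [hne, hxy]
  · simp [hne.symm, inner_eq_zero_symm.mp hxy]
  · simp [hy hp]

theorem Submodule.exists_orthonormal_superset_span_eq (S : Submodule 𝕜 E)
    [FiniteDimensional 𝕜 S] {Z : Set E} (hZS : Z ⊆ S) (hZ : Orthonormal 𝕜 ((↑) : Z → E)) :
    ∃ C : Set E, Z ⊆ C ∧ Orthonormal 𝕜 ((↑) : C → E) ∧ span 𝕜 C = S := by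
  set incl : Z → S := Set.codRestrict Subtype.val S fun z => hZS z.2
  have hincl : Orthonormal 𝕜 ((↑) : Set.range incl → S) :=
    (orthonormal_subtype_range (hZ.codRestrict S _).linearIndependent.injective).mpr
      (hZ.codRestrict S _)
  obtain ⟨U, b, hZU, hb⟩ := hincl.exists_orthonormalBasis_extension
  refine ⟨Set.range (S.subtype ∘ b), fun z hz => ?_, ?_, ?_⟩
  · have hzU : incl ⟨z, hz⟩ ∈ (U : Set S) := hZU (Set.mem_range_self _)
    exact ⟨⟨_, hzU⟩, by simp [hb, incl]⟩
  · exact (orthonormal_subtype_range (S.injective_subtype.comp b.toBasis.injective)).mpr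
      (b.orthonormal.comp_linearIsometry S.subtypeₗᵢ)
  · rw [Set.range_comp, span_image, ← b.coe_toBasis, b.toBasis.span_eq, map_subtype_top]

theorem Submodule.exists_orthonormal_span_eq_of_inner_eq_zero (S : Submodule 𝕜 E)
    [FiniteDimensional 𝕜 S] {a b : E} {p : Prop} (ha : a ∈ S) (hb : b ∈ S) (ha0 : a ≠ 0)
    (hb0 : p → b ≠ 0) (hab : ⟪a, b⟫_𝕜 = 0) :
    ∃ C : Set E, Orthonormal 𝕜 ((↑) : C → E) ∧ span 𝕜 C = S ∧ (‖a‖ : 𝕜)⁻¹ • a ∈ C ∧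
      (p → (‖b‖ : 𝕜)⁻¹ • b ∈ C) ∧
      ∀ v ∈ C, v ≠ (‖a‖ : 𝕜)⁻¹ • a → ¬(p ∧ v = (‖b‖ : 𝕜)⁻¹ • b) →
        ⟪a, v⟫_𝕜 = 0 ∧ (p → ⟪b, v⟫_𝕜 = 0) := by
  set Z := {v | v = (‖a‖ : 𝕜)⁻¹ • a ∨ (p ∧ v = (‖b‖ : 𝕜)⁻¹ • b)}
  have hZ : Orthonormal 𝕜 ((↑) : Z → E) := by
    refine orthonormal_setOf_eq_or_and_eq (norm_smul_inv_norm ha0)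
      (fun hp => norm_smul_inv_norm (hb0 hp)) ?_
    rw [inner_smul_left, inner_smul_right, hab, mul_zero, mul_zero]
  have hZS : Z ⊆ S := by
    rintro v (rfl | ⟨-, rfl⟩)
    exacts [S.smul_mem _ ha, S.smul_mem _ hb]
  obtain ⟨C, hZC, hC, hCS⟩ := S.exists_orthonormal_superset_span_eq hZS hZ
  refine ⟨C, hC, hCS, hZC (Or.inl rfl), fun hp => hZC (Or.inr ⟨hp, rfl⟩), fun v hv h0 h2 => ?_⟩
  have hZv : ∀ z ∈ Z, ⟪z, v⟫_𝕜 = 0 := fun z hz =>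
    hC.2 (fun h => (not_or.mpr ⟨h0, h2⟩) (Subtype.mk.inj h ▸ hz) : (⟨z, hZC hz⟩ : C) ≠ ⟨v, hv⟩)
  exact ⟨inner_eq_zero_of_inner_smul_eq_zero (by simpa using ha0) (hZv _ (Or.inl rfl)),
    fun hp => inner_eq_zero_of_inner_smul_eq_zero (by simpa using hb0 hp)
      (hZv _ (Or.inr ⟨hp, rfl⟩))⟩

end InnerProductSpace

section OrthonormalFamily

variable {𝕜 E ι : Type*} [RCLike 𝕜] [NormedAddCommGroup E] [InnerProductSpace 𝕜 E]
  {e : ι → E} {j j' : ι}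

theorem Orthonormal.norm_sub [DecidableEq ι] (he : Orthonormal 𝕜 e) (hjj' : j ≠ j') :
    ‖e j' - e j‖ = √2 := by
  refine norm_eq_sqrt_of_inner_self_eq (𝕜 := 𝕜) ?_
  rw [inner_sub_left, inner_sub_right, inner_sub_right]
  simp [orthonormal_iff_ite.mp he, he.1, hjj', hjj'.symm, one_add_one_eq_two]
  exact (RCLike.ofReal_ofNat 2).symm

variable [Fintype ι]

theorem sum_filter_ne_and_ne [DecidableEq ι] (e : ι → E) (hjj' : j ≠ j') :
    ∑ t ∈ univ.filter (fun t => t ≠ j ∧ t ≠ j'), e t = ∑ t, e t - (e j + e j') := by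
  have : univ.filter (fun t => t ≠ j ∧ t ≠ j') = univ \ {j, j'} := by ext; simp [not_or]
  rw [this, eq_sub_iff_add_eq, ← sum_pair hjj', sum_sdiff (subset_univ _)]

variable (𝕜) in
/-- For orthonormal `e`, this is `card ι` times the component of `e j + e j'` orthogonal to
`∑ t, e t`. -/
def centeredPairSum (e : ι → E) (j j' : ι) : E :=
  (Fintype.card ι : 𝕜) • (e j + e j') - (2 : 𝕜) • ∑ t, e t

theorem centeredPairSum_comm (e : ι → E) (j j' : ι) :
    centeredPairSum 𝕜 e j j' = centeredPairSum 𝕜 e j' j := by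
  rw [centeredPairSum, centeredPairSum, add_comm (e j)]

theorem inner_centeredPairSum_eq_zero_of_inner_const {w : E} {c : 𝕜}
    (h : ∀ t, ⟪w, e t⟫_𝕜 = c) (j j' : ι) : ⟪w, centeredPairSum 𝕜 e j j'⟫_𝕜 = 0 := by
  simp only [centeredPairSum, inner_sub_right, inner_smul_right, inner_add_right, inner_sum, h,
    sum_const, card_univ, nsmul_eq_mul]
  ring

theorem inner_eq_zero_of_inner_sub_of_inner_centeredPairSum {v : E}
    (ha : ⟪e j' - e j, v⟫_𝕜 = 0) (hb : ⟪centeredPairSum 𝕜 e j j', v⟫_𝕜 = 0)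
    (hs : ⟪∑ t, e t, v⟫_𝕜 = 0) : ⟪e j, v⟫_𝕜 = 0 ∧ ⟪e j', v⟫_𝕜 = 0 := by
  set k : 𝕜 := (Fintype.card ι : 𝕜)
  have hk : 2 * k ≠ 0 :=
    mul_ne_zero two_ne_zero (Nat.cast_ne_zero.mpr (Fintype.card_pos_iff.mpr ⟨j⟩).ne')
  have hj : (2 * k) • e j = centeredPairSum 𝕜 e j j' + (2 : 𝕜) • ∑ t, e t - k • (e j' - e j) := by
    rw [centeredPairSum]
    module
  have hj' : (2 * k) • e j' = centeredPairSum 𝕜 e j j' + (2 : 𝕜) • ∑ t, e t + k • (e j' - e j) := by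
    rw [centeredPairSum]
    module
  constructor
  · refine inner_eq_zero_of_inner_smul_eq_zero hk ?_
    rw [hj, inner_sub_left, inner_add_left, inner_smul_left, inner_smul_left, hb, hs, ha]
    simp
  · refine inner_eq_zero_of_inner_smul_eq_zero hk ?_
    rw [hj', inner_add_left, inner_add_left, inner_smul_left, inner_smul_left, hb, hs, ha]
    simp

variable [DecidableEq ι]

theorem Orthonormal.inner_sum_left_eq_one (he : Orthonormal 𝕜 e) (i : ι) :
    ⟪∑ t, e t, e i⟫_𝕜 = 1 := by
  simp [sum_inner, orthonormal_iff_ite.mp he]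

theorem Orthonormal.inner_centeredPairSum (he : Orthonormal 𝕜 e) (hjj' : j ≠ j') :
    ⟪e j, centeredPairSum 𝕜 e j j'⟫_𝕜 = Fintype.card ι - 2 := by
  simp [centeredPairSum, inner_sub_right, inner_smul_right, inner_add_right, inner_sum,
    orthonormal_iff_ite.mp he, he.1, hjj']

theorem Orthonormal.inner_centeredPairSum' (he : Orthonormal 𝕜 e) (hjj' : j ≠ j') :
    ⟪e j', centeredPairSum 𝕜 e j j'⟫_𝕜 = Fintype.card ι - 2 := by
  rw [centeredPairSum_comm]
  exact he.inner_centeredPairSum hjj'.symm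

theorem Orthonormal.inner_sub_centeredPairSum (he : Orthonormal 𝕜 e) (hjj' : j ≠ j') :
    ⟪e j' - e j, centeredPairSum 𝕜 e j j'⟫_𝕜 = 0 := by
  rw [inner_sub_left, he.inner_centeredPairSum' hjj', he.inner_centeredPairSum hjj', sub_self]

theorem Orthonormal.norm_centeredPairSum (he : Orthonormal 𝕜 e) (hjj' : j ≠ j') :
    ‖centeredPairSum 𝕜 e j j'‖ = √(2 * Fintype.card ι * (Fintype.card ι - 2)) := by
  refine norm_eq_sqrt_of_inner_self_eq (𝕜 := 𝕜) ?_
  have hs := inner_centeredPairSum_eq_zero_of_inner_const he.inner_sum_left_eq_one j j'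
  nth_rw 1 [centeredPairSum]
  rw [inner_sub_left, inner_smul_left, inner_smul_left, inner_add_left,
    he.inner_centeredPairSum hjj', he.inner_centeredPairSum' hjj', hs]
  push_cast
  simp only [map_natCast, map_ofNat]
  ring

theorem Orthonormal.exists_orthonormal_span_eq_inner_eq_zero (he : Orthonormal 𝕜 e)
    (hjj' : j ≠ j') (S : Submodule 𝕜 E) [FiniteDimensional 𝕜 S] (ha : e j' - e j ∈ S)
    (hb : centeredPairSum 𝕜 e j j' ∈ S) (hs : ∀ v ∈ S, ⟪∑ t, e t, v⟫_𝕜 = 0) :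
    ∃ C : Set E, Orthonormal 𝕜 ((↑) : C → E) ∧ Submodule.span 𝕜 C = S ∧
      (‖e j' - e j‖ : 𝕜)⁻¹ • (e j' - e j) ∈ C ∧
      (3 ≤ Fintype.card ι →
        (‖centeredPairSum 𝕜 e j j'‖ : 𝕜)⁻¹ • centeredPairSum 𝕜 e j j' ∈ C) ∧
      ∀ v ∈ C, v ≠ (‖e j' - e j‖ : 𝕜)⁻¹ • (e j' - e j) →
        ¬(3 ≤ Fintype.card ι ∧
          v = (‖centeredPairSum 𝕜 e j j'‖ : 𝕜)⁻¹ • centeredPairSum 𝕜 e j j') →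
        ⟪e j, v⟫_𝕜 = 0 ∧ ⟪e j', v⟫_𝕜 = 0 := by
  have ha0 : e j' - e j ≠ 0 := norm_pos_iff.mp (by rw [he.norm_sub hjj']; positivity)
  have hb0 : 3 ≤ Fintype.card ι → centeredPairSum 𝕜 e j j' ≠ 0 := fun h3 => norm_pos_iff.mp <| by
    have : (3 : ℝ) ≤ Fintype.card ι := by exact_mod_cast h3
    rw [he.norm_centeredPairSum hjj']
    exact Real.sqrt_pos.mpr (by nlinarith)
  obtain ⟨C, hC, hCS, haC, hbC, hCv⟩ :=
    S.exists_orthonormal_span_eq_of_inner_eq_zero ha hb ha0 hb0 (he.inner_sub_centeredPairSum hjj')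
  refine ⟨C, hC, hCS, haC, hbC, fun v hv h0 h2 => ?_⟩
  obtain ⟨hav, hbv⟩ := hCv v hv h0 h2
  refine inner_eq_zero_of_inner_sub_of_inner_centeredPairSum hav ?_
    (hs v (hCS ▸ Submodule.subset_span hv))
  by_cases h3 : 3 ≤ Fintype.card ι
  · exact hbv h3
  · have hn : Fintype.card ι = 2 := by
      have := Fintype.one_lt_card_iff.mpr ⟨j, j', hjj'⟩
      omega
    have hb : ‖centeredPairSum 𝕜 e j j'‖ = 0 := by
      rw [he.norm_centeredPairSum hjj', hn]
      norm_num
    rw [norm_eq_zero.mp hb, inner_zero_left]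

end OrthonormalFamily

section Tuples

variable {ι : Type*} {d : ι → ℕ}

def IsUnitTuples [DecidableEq ι] (δ : ι → ∀ r, Fin (d r)) : Prop :=
  ∀ t r, (δ t r : ℕ) = if r = t then 1 else 0

theorem IsUnitTuples.injective [DecidableEq ι] {δ : ι → ∀ r, Fin (d r)} (hδ : IsUnitTuples δ) :
    Function.Injective δ := by
  intro t t' h
  by_contra hne
  have := hδ t' t
  rw [← h, hδ t t] at this
  simp [hne] at this

variable [Fintype ι] [DecidableEq ι]

variable (𝕜 : Type*) [RCLike 𝕜] in
noncomputable def levelSum (d : ι → ℕ) (n : ℕ) : EuclideanSpace 𝕜 (∀ r, Fin (d r)) :=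
  ∑ i ∈ univ.filter (fun i : ∀ r, Fin (d r) => ∑ r, (i r : ℕ) = n), EuclideanSpace.single i 1

theorem inner_levelSum_single {𝕜 : Type*} [RCLike 𝕜] (n : ℕ) (i : ∀ r, Fin (d r)) :
    ⟪levelSum 𝕜 d n, EuclideanSpace.single i 1⟫_𝕜 = if ∑ r, (i r : ℕ) = n then 1 else 0 := by
  simp [levelSum, sum_inner, EuclideanSpace.inner_single_left]

namespace IsUnitTuples

variable {δ : ι → ∀ r, Fin (d r)}

theorem sum_eq_one (hδ : IsUnitTuples δ) (t : ι) : ∑ r, (δ t r : ℕ) = 1 := by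
  simp [hδ t]

theorem exists_eq_of_sum_eq_one (hδ : IsUnitTuples δ) {i : ∀ r, Fin (d r)}
    (hi : ∑ r, (i r : ℕ) = 1) : ∃ t, δ t = i := by
  obtain ⟨t, -, ht⟩ := exists_ne_zero_of_sum_ne_zero (hi.symm ▸ one_ne_zero)
  refine ⟨t, funext fun r => Fin.ext ?_⟩
  rw [hδ]
  split_ifs with hr
  · subst hr
    have := hi ▸ single_le_sum (f := fun r => (i r : ℕ)) (fun _ _ => Nat.zero_le _) (mem_univ r)
    omega
  · have := add_le_sum (f := fun r => (i r : ℕ)) (fun _ _ => Nat.zero_le _) (mem_univ r)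
      (mem_univ t) hr
    omega

theorem orthonormal {𝕜 : Type*} [RCLike 𝕜] (hδ : IsUnitTuples δ) :
    Orthonormal 𝕜 fun t => EuclideanSpace.single (δ t) (1 : 𝕜) :=
  EuclideanSpace.orthonormal_single.comp _ hδ.injective

theorem inner_levelSum_single {𝕜 : Type*} [RCLike 𝕜] (hδ : IsUnitTuples δ) (n : ℕ) (t : ι) :
    ⟪levelSum 𝕜 d n, EuclideanSpace.single (δ t) 1⟫_𝕜 = if 1 = n then 1 else 0 := by
  rw [_root_.inner_levelSum_single, hδ.sum_eq_one]

theorem levelSum_one {𝕜 : Type*} [RCLike 𝕜] (hδ : IsUnitTuples δ) :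
    levelSum 𝕜 d 1 = ∑ t, EuclideanSpace.single (δ t) (1 : 𝕜) := by
  have : univ.filter (fun i : ∀ r, Fin (d r) => ∑ r, (i r : ℕ) = 1) = univ.image δ := by
    ext i
    simp only [mem_filter, mem_univ, true_and, mem_image]
    exact ⟨hδ.exists_eq_of_sum_eq_one, fun ⟨t, ht⟩ => ht ▸ hδ.sum_eq_one t⟩
  rw [levelSum, this, sum_image hδ.injective.injOn]

theorem inner_sum_single_eq_zero {𝕜 : Type*} [RCLike 𝕜] (hδ : IsUnitTuples δ) {N : ℕ}
    (hN : 1 ≤ N) {v : EuclideanSpace 𝕜 (∀ r, Fin (d r))}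
    (hv : v ∈ (Submodule.span 𝕜 (levelSum 𝕜 d '' Set.Iic N))ᗮ) :
    ⟪∑ t, EuclideanSpace.single (δ t) (1 : 𝕜), v⟫_𝕜 = 0 := by
  rw [← hδ.levelSum_one]
  exact Submodule.inner_right_of_mem_orthogonal
    (Submodule.subset_span (Set.mem_image_of_mem _ (Set.mem_Iic.mpr hN))) hv

end IsUnitTuples

end Tuples

theorem stmt_7_general (k : ℕ) (d : Fin k → ℕ) (hd : ∀ r, 2 ≤ d r)
    (u : ℕ → EuclideanSpace ℂ (∀ r, Fin (d r)))
    (hu : ∀ n, u n = ∑ i ∈ Finset.univ.filter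
        (fun i : ∀ r, Fin (d r) => ∑ r, (i r : ℕ) = n),
      EuclideanSpace.single i (1 : ℂ))
    (S : Submodule ℂ (EuclideanSpace ℂ (∀ r, Fin (d r))))
    (hS : S = (Submodule.span ℂ (u '' Set.Iic (∑ r, (d r - 1))))ᗮ)
    (δ : Fin k → ∀ r, Fin (d r))
    (hδ : ∀ t r, (δ t r : ℕ) = if r = t then 1 else 0)
    (j j' : Fin k) (hjj' : j ≠ j')
    (ζ₀ : EuclideanSpace ℂ (∀ r, Fin (d r)))
    (hζ₀ : ζ₀ = (Real.sqrt 2 : ℂ)⁻¹ •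
      (EuclideanSpace.single (δ j') (1 : ℂ) - EuclideanSpace.single (δ j) (1 : ℂ)))
    (ζ₂ : EuclideanSpace ℂ (∀ r, Fin (d r)))
    (hζ₂ : ζ₂ = (Real.sqrt (2 * (k : ℝ) * ((k : ℝ) - 2)) : ℂ)⁻¹ •
      (((k : ℂ) - 2) • (EuclideanSpace.single (δ j) (1 : ℂ)
          + EuclideanSpace.single (δ j') (1 : ℂ))
        - (2 : ℂ) • ∑ t ∈ Finset.univ.filter (fun t => t ≠ j ∧ t ≠ j'),
            EuclideanSpace.single (δ t) (1 : ℂ))) :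
    ∃ C : Set (EuclideanSpace ℂ (∀ r, Fin (d r))),
      Orthonormal ℂ ((↑) : C → EuclideanSpace ℂ (∀ r, Fin (d r))) ∧
      Submodule.span ℂ C = S ∧
      ζ₀ ∈ C ∧
      (3 ≤ k → ζ₂ ∈ C) ∧
      (∀ v ∈ C, v ≠ ζ₀ → ¬(3 ≤ k ∧ v = ζ₂) →
        (inner ℂ (EuclideanSpace.single (δ j) (1 : ℂ)) v : ℂ) = 0 ∧
        (inner ℂ (EuclideanSpace.single (δ j') (1 : ℂ)) v : ℂ) = 0) := by
  obtain rfl : u = levelSum ℂ d := funext hu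
  subst hS
  have hδ' : IsUnitTuples δ := hδ
  set e : Fin k → EuclideanSpace ℂ (∀ r, Fin (d r)) := fun t => EuclideanSpace.single (δ t) 1
  have he : Orthonormal ℂ e := hδ'.orthonormal
  have hN : 1 ≤ ∑ r, (d r - 1) := le_trans (by have := hd j; omega)
    (single_le_sum (f := fun r => d r - 1) (fun _ _ => Nat.zero_le _) (mem_univ j))
  have key := he.exists_orthonormal_span_eq_inner_eq_zero hjj' _
    (Submodule.mem_orthogonal_span_iff.mpr <| Set.forall_mem_image.mpr fun n _ => by
      rw [inner_sub_right, hδ'.inner_levelSum_single, hδ'.inner_levelSum_single, sub_self])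
    (Submodule.mem_orthogonal_span_iff.mpr <| Set.forall_mem_image.mpr fun n _ =>
      inner_centeredPairSum_eq_zero_of_inner_const (hδ'.inner_levelSum_single n) j j')
    (fun v hv => hδ'.inner_sum_single_eq_zero hN hv)
  rw [Fintype.card_fin] at key
  have hζ₂' : ζ₂ = (‖centeredPairSum ℂ e j j'‖ : ℂ)⁻¹ • centeredPairSum ℂ e j j' := by
    rw [hζ₂, he.norm_centeredPairSum hjj', centeredPairSum, Fintype.card_fin,
      sum_filter_ne_and_ne _ hjj']
    module
  rw [hζ₀, hζ₂', ← he.norm_sub hjj']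
  exact key

/-- For any `j ≠ j'` there is an orthonormal basis `C` of `S` containing
`ζ₀ = (e_{δ_{j'}} − e_{δ_j})/√2` (and, when `k ≥ 3`,
`ζ₂ = [(k−2)(e_{δ_j}+e_{δ_{j'}}) − 2∑_{t≠j,j'} e_{δ_t}]/√(2k(k−2))`) such that every other
element of `C` is orthogonal to both `e_{δ_j}` and `e_{δ_{j'}}`. -/
theorem stmt_7 (k : ℕ) (hk : 2 ≤ k) (d : Fin k → ℕ) (hd : ∀ r, 2 ≤ d r)
    (u : ℕ → EuclideanSpace ℂ (∀ r, Fin (d r)))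
    (hu : ∀ n, u n = ∑ i ∈ Finset.univ.filter
        (fun i : ∀ r, Fin (d r) => ∑ r, (i r : ℕ) = n),
      EuclideanSpace.single i (1 : ℂ))
    (S : Submodule ℂ (EuclideanSpace ℂ (∀ r, Fin (d r))))
    (hS : S = (Submodule.span ℂ (u '' Set.Iic (∑ r, (d r - 1))))ᗮ)
    (δ : Fin k → ∀ r, Fin (d r))
    (hδ : ∀ t r, (δ t r : ℕ) = if r = t then 1 else 0)
    (j j' : Fin k) (hjj' : j ≠ j')
    (ζ₀ : EuclideanSpace ℂ (∀ r, Fin (d r)))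
    (hζ₀ : ζ₀ = (Real.sqrt 2 : ℂ)⁻¹ •
      (EuclideanSpace.single (δ j') (1 : ℂ) - EuclideanSpace.single (δ j) (1 : ℂ)))
    (ζ₂ : EuclideanSpace ℂ (∀ r, Fin (d r)))
    (hζ₂ : ζ₂ = (Real.sqrt (2 * (k : ℝ) * ((k : ℝ) - 2)) : ℂ)⁻¹ •
      (((k : ℂ) - 2) • (EuclideanSpace.single (δ j) (1 : ℂ)
          + EuclideanSpace.single (δ j') (1 : ℂ))
        - (2 : ℂ) • ∑ t ∈ Finset.univ.filter (fun t => t ≠ j ∧ t ≠ j'),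
            EuclideanSpace.single (δ t) (1 : ℂ))) :
    ∃ C : Set (EuclideanSpace ℂ (∀ r, Fin (d r))),
      Orthonormal ℂ ((↑) : C → EuclideanSpace ℂ (∀ r, Fin (d r))) ∧
      Submodule.span ℂ C = S ∧
      ζ₀ ∈ C ∧
      (3 ≤ k → ζ₂ ∈ C) ∧
      (∀ v ∈ C, v ≠ ζ₀ → ¬(3 ≤ k ∧ v = ζ₂) →
        (inner ℂ (EuclideanSpace.single (δ j) (1 : ℂ)) v : ℂ) = 0 ∧
        (inner ℂ (EuclideanSpace.single (δ j') (1 : ℂ)) v : ℂ) = 0) :=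
  stmt_7_general k d hd u hu S hS δ hδ j j' hjj' ζ₀ hζ₀ ζ₂ hζ₂
end

section
/- Let P be the matrix (with respect to the standard basis (e_i)) of the orthogonal projection of H onto S, so P(p,q) = ⟨e_p, P_S e_q⟩ for p, q ∈ I. For every j with 1 ≤ j ≤ k, the partial transpose P^{PT_j} is not positive semidefinite; that is, there exists ξ ∈ H with ⟨ξ, P^{PT_j} ξ⟩ < 0. In particular, the projection onto the completely entangled subspace S is NPT. -/
/-!
The vectors `u n` are the indicators of the level sets of `i ↦ ∑ r, i r`, hence pairwise
orthogonal, and projecting `e q` onto their orthogonal complement gives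
`P p q = δ p q - [|p| = |q|] / #I_{|q|}`. Fix `j' ≠ j` and take `a = 0`, `b = e_j + e_{j'}`.
As `I_0 = {0}`, `P^{PT_j} a a = P a a = 0`, whereas `P^{PT_j} a b = P e_j e_{j'} = -1 / #I_1 ≠ 0`.
A real symmetric matrix with a vanishing diagonal entry and a nonzero entry in the same row has
a negative direction `t • e_a + e_b`.
-/

open scoped ComplexOrder

open Finset

namespace Matrix

variable {n : Type*} [Fintype n] [DecidableEq n]

theorem exists_star_dotProduct_mulVec_neg {M : Matrix n n ℂ} {i j : n} (hii : M i i = 0)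
    {m r : ℝ} (hm : m ≠ 0) (hMij : M i j = m) (hMji : M j i = m) (hMjj : M j j = r) :
    ∃ ξ : n → ℂ, star ξ ⬝ᵥ M *ᵥ ξ < 0 := by
  set t : ℝ := -(|r| + 1) / (2 * m) with ht
  refine ⟨Pi.single i (t : ℂ) + Pi.single j 1, ?_⟩
  have hval : star (Pi.single i (t : ℂ) + Pi.single j 1) ⬝ᵥ
      M *ᵥ (Pi.single i (t : ℂ) + Pi.single j 1) = ((2 * t * m + r : ℝ) : ℂ) := by
    simp [mulVec_add, dotProduct_add, add_dotProduct, hii, hMij, hMji, hMjj]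
    ring
  have htm : 2 * t * m = -(|r| + 1) := by rw [ht]; field_simp
  rw [hval, ← Complex.ofReal_zero, Complex.real_lt_real]
  linarith [le_abs_self r]

end Matrix

section FiberIndicator

variable {ι β : Type*} [Fintype ι] [DecidableEq ι] [DecidableEq β]

noncomputable def fiberIndicator (f : ι → β) (b : β) : EuclideanSpace ℂ ι :=
  ∑ i ∈ {i | f i = b}, EuclideanSpace.single i 1

theorem fiberIndicator_apply (f : ι → β) (b : β) (p : ι) :
    fiberIndicator f b p = if f p = b then 1 else 0 := by
  simp [fiberIndicator]

theorem inner_fiberIndicator (f : ι → β) (a b : β) :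
    inner ℂ (fiberIndicator f a) (fiberIndicator f b) =
      if a = b then (#{i | f i = a} : ℂ) else 0 := by
  rw [fiberIndicator, sum_inner]
  simp only [EuclideanSpace.inner_single_left, fiberIndicator_apply, map_one, one_mul]
  rw [sum_congr rfl fun i hi => by rw [(mem_filter.1 hi).2]]
  split_ifs <;> simp

theorem starProjection_orthogonal_span_fiberIndicator_single {f : ι → β} {s : Set β} {q : ι}
    (hq : f q ∈ s) :
    (Submodule.span ℂ (fiberIndicator f '' s))ᗮ.starProjection (EuclideanSpace.single q 1) =
      EuclideanSpace.single q 1 - (#{i | f i = f q} : ℂ)⁻¹ • fiberIndicator f (f q) := by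
  have hcard : (#{i | f i = f q} : ℂ) ≠ 0 := by
    exact_mod_cast (card_pos.2 ⟨q, by simp⟩).ne'
  refine Submodule.eq_starProjection_of_mem_orthogonal'
    (z := (#{i | f i = f q} : ℂ)⁻¹ • fiberIndicator f (f q)) ?_ ?_ (sub_add_cancel _ _).symm
  · rw [Submodule.mem_orthogonal]
    intro x hx
    induction hx using Submodule.span_induction with
    | mem x hx =>
      obtain ⟨m, -, rfl⟩ := hx
      rw [inner_sub_right, inner_smul_right, inner_fiberIndicator,
        EuclideanSpace.inner_single_right, fiberIndicator_apply]
      by_cases h : m = f q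
      · subst h
        simp [hcard]
      · simp [h, Ne.symm h]
    | zero => simp
    | add x y _ _ hx hy => rw [inner_add_left, hx, hy, add_zero]
    | smul a x _ hx => rw [inner_smul_left, hx, mul_zero]
  · exact Submodule.le_orthogonal_orthogonal _ <|
      Submodule.smul_mem _ _ (Submodule.subset_span ⟨_, hq, rfl⟩)

noncomputable def orthogonalFiberEntry (f : ι → β) (p q : ι) : ℝ :=
  (if p = q then 1 else 0) - if f p = f q then (#{i | f i = f q} : ℝ)⁻¹ else 0

theorem inner_single_starProjection_orthogonal_span_fiberIndicator {f : ι → β} {s : Set β}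
    (p : ι) {q : ι} (hq : f q ∈ s) :
    inner ℂ (EuclideanSpace.single p 1)
        ((Submodule.span ℂ (fiberIndicator f '' s))ᗮ.starProjection
          (EuclideanSpace.single q 1)) =
      orthogonalFiberEntry f p q := by
  rw [starProjection_orthogonal_span_fiberIndicator_single hq, inner_sub_right, inner_smul_right,
    EuclideanSpace.inner_single_left, EuclideanSpace.inner_single_left, fiberIndicator_apply]
  simp only [orthogonalFiberEntry, map_one, one_mul, PiLp.single_apply]
  split_ifs <;> simp

end FiberIndicator

section BinaryIndex

variable {ι : Type*} [DecidableEq ι] {d : ι → ℕ}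

def binaryIndex (hd : ∀ r, 2 ≤ d r) (s : Finset ι) : ∀ r, Fin (d r) :=
  fun r => ⟨if r ∈ s then 1 else 0, by split_ifs <;> linarith [hd r]⟩

theorem update_binaryIndex (hd : ∀ r, 2 ≤ d r) (s t : Finset ι) (j : ι) :
    Function.update (binaryIndex hd s) j (binaryIndex hd t j) =
      binaryIndex hd (if j ∈ t then insert j s else s.erase j) := by
  funext r
  by_cases hr : r = j
  · subst hr
    split_ifs <;> simp_all [binaryIndex]
  · split_ifs <;> simp [binaryIndex, hr]

theorem binaryIndex_injective (hd : ∀ r, 2 ≤ d r) : Function.Injective (binaryIndex hd) := by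
  intro s t h
  ext r
  have hr := congrArg Fin.val (congrFun h r)
  simp only [binaryIndex] at hr
  split_ifs at hr <;> simp_all

end BinaryIndex

section CoordSum

variable {ι : Type*} [Fintype ι] {d : ι → ℕ}

def coordSum (i : ∀ r, Fin (d r)) : ℕ :=
  ∑ r, (i r : ℕ)

theorem coordSum_le (i : ∀ r, Fin (d r)) : coordSum i ≤ ∑ r, (d r - 1) :=
  sum_le_sum fun r _ => Nat.le_sub_one_of_lt (i r).is_lt

variable [DecidableEq ι]

theorem coordSum_binaryIndex (hd : ∀ r, 2 ≤ d r) (s : Finset ι) :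
    coordSum (binaryIndex hd s) = #s := by
  simp [coordSum, binaryIndex]

theorem card_coordSum_eq_zero [∀ r, NeZero (d r)] :
    #{i : ∀ r, Fin (d r) | coordSum i = 0} = 1 :=
  card_eq_one.2 ⟨0, by
    ext i
    simp only [coordSum, mem_filter, mem_univ, true_and, mem_singleton, sum_eq_zero_iff,
      funext_iff, forall_const, Pi.zero_apply, Fin.ext_iff, Fin.val_zero]⟩

theorem card_coordSum_eq_one_pos (hd : ∀ r, 2 ≤ d r) (j : ι) :
    0 < #{i : ∀ r, Fin (d r) | coordSum i = 1} :=
  card_pos.2 ⟨binaryIndex hd {j}, by simp [coordSum_binaryIndex]⟩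

theorem orthogonalFiberEntry_coordSum_binaryIndex_empty (hd : ∀ r, 2 ≤ d r) :
    orthogonalFiberEntry coordSum (binaryIndex hd ∅) (binaryIndex hd ∅) = 0 := by
  have : ∀ r, NeZero (d r) := fun r => ⟨by linarith [hd r]⟩
  simp [orthogonalFiberEntry, coordSum_binaryIndex, card_coordSum_eq_zero]

theorem orthogonalFiberEntry_coordSum_binaryIndex_singleton (hd : ∀ r, 2 ≤ d r) {j j' : ι}
    (hj : j ≠ j') :
    orthogonalFiberEntry coordSum (binaryIndex hd {j}) (binaryIndex hd {j'}) =
      -(#{i : ∀ r, Fin (d r) | coordSum i = 1} : ℝ)⁻¹ := by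
  have hne : binaryIndex hd {j} ≠ binaryIndex hd {j'} :=
    (binaryIndex_injective hd).ne (by simpa using hj)
  simp [orthogonalFiberEntry, hne, coordSum_binaryIndex]

end CoordSum

/-- The projection onto the completely entangled subspace `S` is NPT: for every `j`, its
partial transpose at level `j` is not positive semidefinite, i.e. there is a vector `ξ`
with `⟨ξ, P^{PT_j} ξ⟩ < 0`. -/
theorem stmt_8 (k : ℕ) (hk : 2 ≤ k) (d : Fin k → ℕ) (hd : ∀ r, 2 ≤ d r)
    (u : ℕ → EuclideanSpace ℂ (∀ r, Fin (d r)))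
    (hu : ∀ n, u n = ∑ i ∈ Finset.univ.filter
        (fun i : ∀ r, Fin (d r) => ∑ r, (i r : ℕ) = n),
      EuclideanSpace.single i (1 : ℂ))
    (S : Submodule ℂ (EuclideanSpace ℂ (∀ r, Fin (d r))))
    (hS : S = (Submodule.span ℂ (u '' Set.Iic (∑ r, (d r - 1))))ᗮ)
    (P : Matrix (∀ r, Fin (d r)) (∀ r, Fin (d r)) ℂ)
    (hP : ∀ p q, P p q = (inner ℂ (EuclideanSpace.single p (1 : ℂ))
      ((S.orthogonalProjectionOnto (EuclideanSpace.single q (1 : ℂ)) : EuclideanSpace ℂ (∀ r, Fin (d r)))) : ℂ))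
    (PT : Fin k → Matrix (∀ r, Fin (d r)) (∀ r, Fin (d r)) ℂ)
    (hPT : ∀ j p q, PT j p q =
      P (Function.update p j (q j)) (Function.update q j (p j))) :
    ∀ j : Fin k, (∃ ξ : (∀ r, Fin (d r)) → ℂ,
        dotProduct (star ξ) ((PT j).mulVec ξ) < 0) ∧
      ¬ (PT j).PosSemidef := by
  intro j
  have : Nontrivial (Fin k) := Fin.nontrivial_iff_two_le.2 hk
  obtain ⟨j', hj'⟩ := exists_ne j
  have hP' : ∀ p q, P p q = orthogonalFiberEntry coordSum p q := by
    intro p q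
    rw [hP, hS, show u = fiberIndicator coordSum from funext hu,
      ← Submodule.starProjection_apply]
    exact inner_single_starProjection_orthogonal_span_fiberIndicator p (coordSum_le q)
  have hab : Function.update (binaryIndex hd ∅) j (binaryIndex hd {j, j'} j) =
      binaryIndex hd {j} := by
    simp [update_binaryIndex]
  have hba : Function.update (binaryIndex hd {j, j'}) j (binaryIndex hd ∅ j) =
      binaryIndex hd {j'} := by
    simp [update_binaryIndex, erase_insert_eq_erase, hj'.symm]
  obtain ⟨ξ, hξ⟩ := Matrix.exists_star_dotProduct_mulVec_neg (M := PT j)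
    (i := binaryIndex hd ∅) (j := binaryIndex hd {j, j'})
    (m := -(#{i : ∀ r, Fin (d r) | coordSum i = 1} : ℝ)⁻¹)
    (by rw [hPT, Function.update_eq_self, hP',
      orthogonalFiberEntry_coordSum_binaryIndex_empty, Complex.ofReal_zero])
    (neg_ne_zero.2 (inv_ne_zero (by exact_mod_cast (card_coordSum_eq_one_pos hd j).ne')))
    (by rw [hPT, hab, hba, hP', orthogonalFiberEntry_coordSum_binaryIndex_singleton hd hj'.symm])
    (by rw [hPT, hba, hab, hP', orthogonalFiberEntry_coordSum_binaryIndex_singleton hd hj'])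
    (by rw [hPT, Function.update_eq_self, hP'])
  exact ⟨⟨ξ, hξ⟩, fun h => (h.dotProduct_mulVec_nonneg ξ).not_gt hξ⟩
end

section
/- There do not exist a natural number m < d_1 d_2 ⋯ d_k and an orthonormal family ψ_1, …, ψ_m of product vectors, with each ψ_s ∈ T, such that the orthogonal complement of span{ψ_1, …, ψ_m} contains no nonzero product vector. In other words, T = S^⊥ does not contain any unextendable orthonormal product basis. -/
/-!
A product vector in `T` has coefficients `∏ r, x r (i r)` that are constant on each level
`I_n`. Comparing two tensor factors at a time shows that it is either geometric,
`c • (t ^ |i|)_i`, or supported at the top index `(d_1 - 1, …, d_k - 1)`.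

If some `ψ s₀` is supported at the top, orthogonality to `ψ s₀` kills the top coefficient of
every other `ψ s`, so a geometric `ψ s` has `c * t = 0`. Hence every `ψ s` vanishes on the
level `n = 1`, and a basis vector of weight one is a product vector orthogonal to the family.

Otherwise `ψ s = c s • (t s ^ |i|)_i` and
`⟪ψ s, ψ s'⟫ = conj (c s) * c s' * P (conj (t s) * t s')`, where
`P = ∏ r, (1 + X + ⋯ + X ^ (d r - 1))` has degree `N` and all of its roots are on the unit
circle. If `m > N`, then for each `s` the `m - 1` distinct numbers `conj (t s) * t s'`
(`s' ≠ s`) are all the roots of `P`. Vieta then gives `conj (t s) * ∑ t = 1 - k` for every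
`s`, which contradicts the injectivity of `t`. So `m ≤ N`, and we can distribute the points
`conj (t s)` among the factors `r`, at most `d r - 1` to factor `r`. The coefficient vectors
of the polynomials `q r = ∏ (X - conj (t s))` then form a nonzero product vector that is
orthogonal to every `ψ s`.
-/

open Finset Function Polynomial ComplexConjugate

@[to_additive]
theorem Finset.prod_update_update_mul {ι M : Type*} [Fintype ι] [DecidableEq ι] [CommMonoid M]
    (g : ι → M) {p q : ι} (hpq : p ≠ q) (a b : M) :
    (∏ r, update (update g p a) q b r) * (g p * g q) = a * b * ∏ r, g r := by
  have hp : p ∈ univ \ {q} := by simp [hpq]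
  rw [prod_update_of_mem (mem_univ q), prod_update_of_mem hp,
    prod_eq_mul_prod_sdiff_singleton_of_mem (mem_univ q) g,
    prod_eq_mul_prod_sdiff_singleton_of_mem hp g]
  ac_rfl

theorem Fin.apply_ne_zero_of_ne_zero_succ {M : Type*} [Zero M] {n : ℕ} {f : Fin n → M}
    (hstep : ∀ b (hb : b + 1 < n), f ⟨b + 1, hb⟩ ≠ 0 → f ⟨b, by omega⟩ ≠ 0)
    {j : Fin n} (hj : f j ≠ 0) {j₀ : Fin n} (hj₀ : (j₀ : ℕ) = 0) : f j₀ ≠ 0 := by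
  suffices ∀ m b (hb : b < n), b + m = j → f ⟨b, hb⟩ ≠ 0 by
    obtain ⟨j₀, _⟩ := j₀
    subst hj₀
    exact this j 0 _ (zero_add _)
  intro m
  induction m with
  | zero => intro b hb h; simp only [add_zero] at h; subst h; exact hj
  | succ m ih => intro b hb h; exact hstep b (by omega) (ih (b + 1) _ (by omega))

theorem eq_one_of_pairwise_mul_eq_one {ι : Type*} [Fintype ι] (hι : 3 ≤ Fintype.card ι) {a : ι → ℝ}
    (ha : ∀ s, 0 ≤ a s) (h : ∀ s s', s ≠ s' → a s * a s' = 1) (s : ι) : a s = 1 := by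
  classical
  obtain ⟨p, hp, q, hq, hpq⟩ := one_lt_card.mp
    (show 1 < (univ.erase s).card by rw [card_erase_of_mem (mem_univ s), card_univ]; omega)
  have h₁ := h s p (ne_of_mem_erase hp).symm
  have h₂ := h s q (ne_of_mem_erase hq).symm
  have h₃ := h p q hpq
  nlinarith [ha s, ha p, ha q]

theorem Submodule.mem_orthogonal_span_range {𝕜 E ι : Type*} [RCLike 𝕜] [NormedAddCommGroup E]
    [InnerProductSpace 𝕜 E] {ψ : ι → E} {w : E} (h : ∀ s, inner 𝕜 (ψ s) w = 0) :
    w ∈ (span 𝕜 (Set.range ψ))ᗮ := by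
  refine (isOrtho_span.mpr ?_).ge (mem_span_singleton_self w)
  rintro _ ⟨s, rfl⟩ _ rfl
  exact h s

theorem Orthonormal.injective_of_eq_smul {𝕜 E ι α : Type*} [RCLike 𝕜] [NormedAddCommGroup E]
    [InnerProductSpace 𝕜 E] {ψ : ι → E} (hψ : Orthonormal 𝕜 ψ) {v : α → E} {c : ι → 𝕜}
    {t : ι → α} (h : ∀ s, ψ s = c s • v (t s)) : Injective t := by
  intro s s' hts
  by_contra hne
  have hc : c s ≠ 0 := fun hc => hψ.ne_zero s (by rw [h, hc, zero_smul])
  have hpar : ψ s' = (c s' / c s) • ψ s := by rw [h, h, hts, smul_smul, div_mul_cancel₀ _ hc]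
  have h0 : inner 𝕜 (ψ s) (ψ s') = 0 := hψ.2 hne
  rw [hpar, inner_smul_right, inner_self_eq_norm_sq_to_K, hψ.1 s, RCLike.ofReal_one, one_pow,
    mul_one, div_eq_zero_iff, or_iff_left hc] at h0
  exact hψ.ne_zero s' (by rw [h, h0, zero_smul])

theorem Polynomial.natDegree_geom_sum_X {R : Type*} [CommRing R] [Nontrivial R] {n : ℕ}
    (hn : n ≠ 0) : (∑ i ∈ range n, (X : R[X]) ^ i).natDegree = n - 1 := by
  have h := congrArg natDegree (mul_geom_sum (X : R[X]) n)
  rw [← C_1, (monic_X_sub_C 1).natDegree_mul (monic_geom_sum_X hn), natDegree_X_sub_C,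
    natDegree_X_pow_sub_C] at h
  omega

theorem Polynomial.nextCoeff_geom_sum_X {R : Type*} [CommRing R] [Nontrivial R] {n : ℕ}
    (hn : 2 ≤ n) : (∑ i ∈ range n, (X : R[X]) ^ i).nextCoeff = 1 := by
  rw [nextCoeff, natDegree_geom_sum_X (by omega), if_neg (by omega), finsetSum_coeff]
  simp only [coeff_X_pow]
  rw [sum_ite_eq, if_pos (mem_range.mpr (by omega))]

theorem card_le_natDegree_of_isRoot_conj_mul {P : ℂ[X]} (hP : P.Monic) (hdeg : 2 ≤ P.natDegree)
    (hnorm : ∀ z, P.IsRoot z → ‖z‖ = 1) (hnext : P.nextCoeff ≠ 1) {ι : Type*} [Fintype ι]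
    {t : ι → ℂ} (ht : Injective t) (hroot : ∀ s s', s ≠ s' → P.IsRoot (conj (t s) * t s')) :
    Fintype.card ι ≤ P.natDegree := by
  classical
  by_contra! hlt
  have hsplit := IsAlgClosed.splits P
  have hnorm_t : ∀ s, ‖t s‖ = 1 := eq_one_of_pairwise_mul_eq_one (by omega) (fun s => norm_nonneg _)
    fun s s' h => by simpa using hnorm _ (hroot s s' h)
  have hroots (s : ι) : (univ.erase s).val.map (fun s' => conj (t s) * t s') = P.roots := by
    have hconj : conj (t s) ≠ 0 := by simp [← norm_ne_zero_iff, hnorm_t s]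
    refine Multiset.eq_of_le_of_card_le ((Multiset.le_iff_subset ?_).mpr fun z hz => ?_) ?_
    · exact (univ.erase s).nodup.map fun a b hab => ht (mul_left_cancel₀ hconj hab)
    · obtain ⟨s', hs', rfl⟩ := Multiset.mem_map.mp hz
      exact (mem_roots hP.ne_zero).mpr (hroot s s' (ne_of_mem_erase hs').symm)
    · rw [← hsplit.natDegree_eq_card_roots, Multiset.card_map, ← Finset.card_def,
        card_erase_of_mem (mem_univ s), card_univ]
      omega
  -- Vieta: the roots sum to `-nextCoeff`, and `conj (t s) * t s = 1`
  have hsum (s : ι) : conj (t s) * ∑ s', t s' = 1 - P.nextCoeff := by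
    rw [hsplit.nextCoeff_eq_neg_sum_roots_of_monic hP, ← hroots s, ← Finset.sum_eq_multiset_sum,
      ← mul_sum, sum_erase_eq_sub (mem_univ s), mul_sub, Complex.conj_mul', hnorm_t s]
    push_cast
    ring
  obtain ⟨s, s', hss'⟩ := Fintype.exists_pair_of_one_lt_card (α := ι) (by omega)
  have htot : ∑ s'', t s'' ≠ 0 := fun h0 => by
    have := hsum s
    rw [h0, mul_zero, eq_comm, sub_eq_zero] at this
    exact hnext this.symm
  have hconj : conj (t s) = conj (t s') := mul_right_cancel₀ htot ((hsum s).trans (hsum s').symm)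
  exact hss' (ht ((starRingEnd ℂ).injective hconj))

namespace Multipartite

variable {κ : Type*} [Fintype κ] {d : κ → ℕ}

def weight (i : ∀ r, Fin (d r)) : ℕ := ∑ r, (i r : ℕ)

def LevelConst {α : Type*} (f : (∀ r, Fin (d r)) → α) : Prop :=
  ∀ i j, weight i = weight j → f i = f j

def IsTopSupported {M : Type*} [Zero M] (f : (∀ r, Fin (d r)) → M) : Prop :=
  ∀ i, (∃ q, (i q : ℕ) + 1 < d q) → f i = 0

variable {𝕜 : Type*} [RCLike 𝕜]

def tensorVec (x : ∀ r, Fin (d r) → 𝕜) : EuclideanSpace 𝕜 (∀ r, Fin (d r)) :=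
  WithLp.toLp 2 fun i => ∏ r, x r (i r)

def geomVec (t : 𝕜) : EuclideanSpace 𝕜 (∀ r, Fin (d r)) :=
  tensorVec fun r (j : Fin (d r)) => t ^ (j : ℕ)

theorem geomVec_apply (t : 𝕜) (i : ∀ r, Fin (d r)) : geomVec t i = t ^ weight i :=
  prod_pow_eq_pow_sum _ _ _

theorem tensorVec_single (i : ∀ r, Fin (d r)) :
    tensorVec (d := d) (fun r => Pi.single (i r) 1) = EuclideanSpace.single i (1 : 𝕜) := by
  ext j
  simp [tensorVec, Pi.single_apply, prod_boole, funext_iff]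

variable (d) in
noncomputable def geomPoly : ℂ[X] := ∏ r, ∑ j ∈ range (d r), X ^ j

theorem geomPoly_monic (hd : ∀ r, 0 < d r) : (geomPoly d).Monic :=
  monic_prod_of_monic _ _ fun r _ => monic_geom_sum_X (hd r).ne'

theorem natDegree_geomPoly (hd : ∀ r, 0 < d r) : (geomPoly d).natDegree = ∑ r, (d r - 1) := by
  rw [geomPoly, natDegree_prod_of_monic _ _ fun r _ => monic_geom_sum_X (hd r).ne']
  exact sum_congr rfl fun r _ => natDegree_geom_sum_X (hd r).ne'

theorem nextCoeff_geomPoly (hd : ∀ r, 2 ≤ d r) : (geomPoly d).nextCoeff = Fintype.card κ := by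
  rw [geomPoly, Monic.nextCoeff_prod _ _ fun r _ => monic_geom_sum_X (by have := hd r; omega)]
  simp [nextCoeff_geom_sum_X (hd _)]

theorem eval_geomPoly (z : ℂ) : (geomPoly d).eval z = ∏ r, ∑ j : Fin (d r), z ^ (j : ℕ) := by
  simp [geomPoly, eval_prod, eval_finsetSum, Fin.sum_univ_eq_sum_range (fun j => z ^ j)]

theorem norm_eq_one_of_isRoot_geomPoly (hd : ∀ r, 0 < d r) {z : ℂ}
    (hz : (geomPoly d).IsRoot z) : ‖z‖ = 1 := by
  rw [IsRoot, geomPoly, eval_prod, prod_eq_zero_iff] at hz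
  obtain ⟨r, -, hr⟩ := hz
  have hpow : z ^ d r = 1 := by
    have := mul_geom_sum z (d r)
    rw [← eval_geom_sum, hr, mul_zero] at this
    exact (sub_eq_zero.mp this.symm)
  exact (pow_eq_one_iff_of_nonneg (norm_nonneg z) (hd r).ne').mp
    (by rw [← norm_pow, hpow, norm_one])

theorem exists_monic_natDegree_eq_forall_isRoot {R : Type*} [CommRing R] [Nontrivial R]
    {ι : Type*} [Fintype ι] (z : ι → R) (h : Fintype.card ι ≤ ∑ r, (d r - 1)) :
    ∃ q : κ → R[X], (∀ r, (q r).Monic ∧ (q r).natDegree = d r - 1) ∧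
      ∀ s, ∃ r, (q r).IsRoot (z s) := by
  obtain ⟨f⟩ := Function.Embedding.nonempty_of_card_le (β := Σ r, Fin (d r - 1))
    (by simpa [Fintype.card_sigma] using h)
  let w := extend f z 0
  refine ⟨fun r => ∏ j : Fin (d r - 1), (X - C (w ⟨r, j⟩)),
    fun r => ⟨monic_prod_of_monic _ _ fun j _ => monic_X_sub_C _, ?_⟩, fun s => ⟨(f s).1, ?_⟩⟩
  · rw [natDegree_prod_of_monic _ _ fun j _ => monic_X_sub_C _]
    simp
  · rw [IsRoot, eval_prod]
    exact prod_eq_zero (mem_univ (f s).2) (by simp [w, f.injective.extend_apply])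

variable [DecidableEq κ]

section Classification

variable {K : Type*} [Field K] {x : ∀ r, Fin (d r) → K}

theorem LevelConst.mul_eq_mul (hx : LevelConst fun i => ∏ r, x r (i r))
    {i₀ : ∀ r, Fin (d r)} (h₀ : ∏ r, x r (i₀ r) ≠ 0) {p q : κ} (hpq : p ≠ q)
    {a a' : Fin (d p)} {b b' : Fin (d q)} (hab : (a : ℕ) + b = a' + b') :
    x p a * x q b = x p a' * x q b' := by
  have hprod (a : Fin (d p)) (b : Fin (d q)) :
      (∏ r, x r (update (update i₀ p a) q b r)) * (x p (i₀ p) * x q (i₀ q))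
        = x p a * x q b * ∏ r, x r (i₀ r) := by
    simp only [apply_update]
    exact prod_update_update_mul _ hpq _ _
  have hweight (a : Fin (d p)) (b : Fin (d q)) :
      weight (update (update i₀ p a) q b) + ((i₀ p : ℕ) + i₀ q) = a + b + weight i₀ := by
    simp only [weight, apply_update (fun r (j : Fin (d r)) => (j : ℕ))]
    exact sum_update_update_add (fun r => (i₀ r : ℕ)) hpq _ _
  have hlevel : ∏ r, x r (update (update i₀ p a) q b r) =
      ∏ r, x r (update (update i₀ p a') q b' r) :=
    hx _ _ (by linarith [hweight a b, hweight a' b'])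
  exact mul_right_cancel₀ h₀ ((hprod a b).symm.trans (hlevel ▸ hprod a' b'))

theorem LevelConst.exists_eq_mul_pow_weight [Nontrivial κ] (hd : ∀ r, 2 ≤ d r)
    (hx : LevelConst fun i => ∏ r, x r (i r)) {i₀ : ∀ r, Fin (d r)} (hi₀ : weight i₀ = 0)
    (h₀ : ∏ r, x r (i₀ r) ≠ 0) :
    ∃ c t : K, ∀ i, ∏ r, x r (i r) = c * t ^ weight i := by
  have hzero (r : κ) : (i₀ r : ℕ) = 0 := sum_eq_zero_iff.mp hi₀ r (mem_univ r)
  have hx₀ (r : κ) : x r (i₀ r) ≠ 0 := prod_ne_zero_iff.mp h₀ r (mem_univ r)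
  let one (r : κ) : Fin (d r) := ⟨1, hd r⟩
  let τ (r : κ) : K := x r (one r) / x r (i₀ r)
  have hτ (p q : κ) : τ p = τ q := by
    rcases eq_or_ne p q with rfl | hpq
    · rfl
    have := hx.mul_eq_mul h₀ hpq (a := one p) (b := i₀ q) (a' := i₀ p) (b' := one q)
      (by simp [one, hzero])
    rw [div_eq_div_iff (hx₀ p) (hx₀ q)]
    linear_combination this
  have hstep (q : κ) (b : ℕ) (hb : b + 1 < d q) : x q ⟨b + 1, hb⟩ = τ q * x q ⟨b, by omega⟩ := by
    obtain ⟨p, hpq⟩ := exists_ne q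
    have := hx.mul_eq_mul h₀ hpq (a := i₀ p) (b := ⟨b + 1, hb⟩) (a' := one p) (b' := ⟨b, by omega⟩)
      (by simp [one, hzero, add_comm])
    rw [← hτ p, div_mul_eq_mul_div, eq_div_iff (hx₀ p)]
    linear_combination this
  have hgeom (q : κ) (b : ℕ) (hb : b < d q) : x q ⟨b, hb⟩ = x q (i₀ q) * τ q ^ b := by
    induction b with
    | zero => rw [pow_zero, mul_one]; exact congrArg (x q) (Fin.ext (hzero q).symm)
    | succ b ih => rw [hstep q b hb, ih, pow_succ]; ring
  obtain ⟨r₀⟩ : Nonempty κ := inferInstance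
  refine ⟨∏ r, x r (i₀ r), τ r₀, fun i => ?_⟩
  calc ∏ r, x r (i r) = ∏ r, (x r (i₀ r) * τ r₀ ^ (i r : ℕ)) :=
        prod_congr rfl fun r _ => by rw [hτ r₀ r, ← hgeom]
    _ = (∏ r, x r (i₀ r)) * τ r₀ ^ weight i := by rw [prod_mul_distrib, prod_pow_eq_pow_sum]; rfl

theorem LevelConst.prod_ne_zero_of_weight_eq_zero [Nontrivial κ] (hd : ∀ r, 2 ≤ d r)
    (hx : LevelConst fun i => ∏ r, x r (i r)) {i : ∀ r, Fin (d r)}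
    (hi : ∃ q, (i q : ℕ) + 1 < d q) (h : ∏ r, x r (i r) ≠ 0) {i₀ : ∀ r, Fin (d r)}
    (hi₀ : weight i₀ = 0) : ∏ r, x r (i₀ r) ≠ 0 := by
  obtain ⟨q, hq⟩ := hi
  have hzero (r : κ) : (i₀ r : ℕ) = 0 := sum_eq_zero_iff.mp hi₀ r (mem_univ r)
  have hxi (r : κ) : x r (i r) ≠ 0 := prod_ne_zero_iff.mp h r (mem_univ r)
  have hother (p : κ) (hpq : p ≠ q) : x p (i₀ p) ≠ 0 := by
    refine Fin.apply_ne_zero_of_ne_zero_succ (fun b hb hne => ?_) (hxi p) (hzero p)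
    have := hx.mul_eq_mul h hpq (a := ⟨b, by omega⟩) (b := ⟨i q + 1, hq⟩) (a' := ⟨b + 1, hb⟩)
      (b' := i q) (by simp only; ring)
    exact left_ne_zero_of_mul (this ▸ mul_ne_zero hne (hxi q))
  have hself : x q (i₀ q) ≠ 0 := by
    obtain ⟨p, hpq⟩ := exists_ne q
    refine Fin.apply_ne_zero_of_ne_zero_succ (fun b hb hne => ?_) (hxi q) (hzero q)
    have := hx.mul_eq_mul h hpq.symm (a := ⟨b, by omega⟩) (b := ⟨1, hd p⟩) (a' := ⟨b + 1, hb⟩)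
      (b' := i₀ p) (by simp [hzero])
    exact left_ne_zero_of_mul (this ▸ mul_ne_zero hne (hother p hpq))
  refine prod_ne_zero_iff.mpr fun r _ => ?_
  rcases eq_or_ne r q with rfl | hrq
  · exact hself
  · exact hother r hrq

theorem LevelConst.eq_mul_pow_weight_or_eq_zero [Nontrivial κ] (hd : ∀ r, 2 ≤ d r)
    (hx : LevelConst fun i => ∏ r, x r (i r)) :
    (∃ c t : K, ∀ i, ∏ r, x r (i r) = c * t ^ weight i) ∨
      ∀ i : ∀ r, Fin (d r), (∃ q, (i q : ℕ) + 1 < d q) → ∏ r, x r (i r) = 0 := by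
  let i₀ : ∀ r, Fin (d r) := fun r => ⟨0, by have := hd r; omega⟩
  have hi₀ : weight i₀ = 0 := by simp [weight, i₀]
  by_cases h₀ : ∏ r, x r (i₀ r) = 0
  · exact .inr fun i hi => by_contra fun h => hx.prod_ne_zero_of_weight_eq_zero hd hi h hi₀ h₀
  · exact .inl (hx.exists_eq_mul_pow_weight hd hi₀ h₀)

end Classification

variable (𝕜) in
def levelConstSubmodule : Submodule 𝕜 (EuclideanSpace 𝕜 (∀ r, Fin (d r))) where
  carrier := {v | LevelConst v}
  add_mem' ha hb i j h := by simp [ha i j h, hb i j h]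
  zero_mem' _ _ _ := rfl
  smul_mem' c _ hv i j h := by simp [hv i j h]

theorem sum_single_mem_levelConstSubmodule (n : ℕ) :
    ∑ i ∈ univ.filter (fun i : ∀ r, Fin (d r) => weight i = n), EuclideanSpace.single i (1 : 𝕜)
      ∈ levelConstSubmodule 𝕜 := by
  intro i j hij
  simp [hij]

theorem inner_tensorVec (x y : ∀ r, Fin (d r) → 𝕜) :
    inner 𝕜 (tensorVec x) (tensorVec y) = ∏ r, ∑ j, starRingEnd 𝕜 (x r j) * y r j := by
  simp [Fintype.prod_sum, tensorVec, PiLp.inner_apply, prod_mul_distrib, mul_comm]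

theorem eq_smul_geomVec_or_isTopSupported [Nontrivial κ] (hd : ∀ r, 2 ≤ d r)
    {v : EuclideanSpace 𝕜 (∀ r, Fin (d r))} (hv : v ∈ levelConstSubmodule 𝕜)
    {x : ∀ r, Fin (d r) → 𝕜} (hx : ∀ i, v i = ∏ r, x r (i r)) :
    (∃ c t : 𝕜, v = c • geomVec t) ∨ IsTopSupported v := by
  have hlevel : LevelConst fun i => ∏ r, x r (i r) := fun i j h => by
    show ∏ r, x r (i r) = ∏ r, x r (j r)
    rw [← hx, ← hx]
    exact hv i j h
  rcases hlevel.eq_mul_pow_weight_or_eq_zero hd with ⟨c, t, hct⟩ | htop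
  · exact .inl ⟨c, t, by ext i; simp [hx, hct, geomVec_apply]⟩
  · exact .inr fun i hi => (hx i).trans (htop i hi)

theorem inner_geomVec (t t' : ℂ) :
    inner ℂ (geomVec t : EuclideanSpace ℂ (∀ r, Fin (d r))) (geomVec t') =
      (geomPoly d).eval (conj t * t') := by
  simp [geomVec, inner_tensorVec, eval_geomPoly, mul_pow]

theorem inner_geomVec_tensorVec_coeff (t : 𝕜) {q : κ → 𝕜[X]} (hq : ∀ r, (q r).natDegree < d r) :
    inner 𝕜 (geomVec t) (tensorVec fun r (j : Fin (d r)) => (q r).coeff j) =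
      ∏ r, (q r).eval (conj t) := by
  rw [geomVec, inner_tensorVec]
  refine prod_congr rfl fun r _ => ?_
  rw [eval_eq_sum_range' (hq r), ← Fin.sum_univ_eq_sum_range]
  simp [mul_comm]

theorem card_le_of_orthonormal_smul_geomVec [Nontrivial κ] (hd : ∀ r, 2 ≤ d r) {ι : Type*}
    [Fintype ι] {ψ : ι → EuclideanSpace ℂ (∀ r, Fin (d r))} (hψ : Orthonormal ℂ ψ)
    {c t : ι → ℂ} (h : ∀ s, ψ s = c s • geomVec (t s)) :
    Fintype.card ι ≤ ∑ r, (d r - 1) := by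
  have hd₀ (r : κ) : 0 < d r := by have := hd r; omega
  have hc (s : ι) : c s ≠ 0 := fun hc => hψ.ne_zero s (by rw [h, hc, zero_smul])
  have hκ : 1 < Fintype.card κ := Fintype.one_lt_card
  rw [← natDegree_geomPoly hd₀]
  refine card_le_natDegree_of_isRoot_conj_mul (geomPoly_monic hd₀) ?_
    (fun z => norm_eq_one_of_isRoot_geomPoly hd₀) ?_ (hψ.injective_of_eq_smul h)
    fun s s' hss' => ?_
  · rw [natDegree_geomPoly hd₀]
    calc 2 ≤ ∑ _r : κ, 1 := by simp only [sum_const, card_univ, smul_eq_mul, mul_one]; omega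
      _ ≤ ∑ r, (d r - 1) := sum_le_sum fun r _ => by have := hd r; omega
  · rw [nextCoeff_geomPoly hd]
    exact_mod_cast hκ.ne'
  · have h0 : inner ℂ (ψ s) (ψ s') = 0 := hψ.2 hss'
    rw [h, h, inner_smul_left, inner_smul_right, inner_geomVec] at h0
    simpa [hc] using h0

theorem exists_tensorVec_ne_zero_forall_inner_geomVec_eq_zero (hd : ∀ r, 0 < d r) {ι : Type*}
    [Fintype ι] (t : ι → 𝕜) (h : Fintype.card ι ≤ ∑ r, (d r - 1)) :
    ∃ y : ∀ r, Fin (d r) → 𝕜, tensorVec y ≠ 0 ∧ ∀ s, inner 𝕜 (geomVec (t s)) (tensorVec y) = 0 := by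
  obtain ⟨q, hq, hroot⟩ := exists_monic_natDegree_eq_forall_isRoot (fun s => conj (t s)) h
  refine ⟨fun r j => (q r).coeff j, fun h0 => ?_, fun s => ?_⟩
  · let top : ∀ r, Fin (d r) := fun r => ⟨d r - 1, by have := hd r; omega⟩
    have htop : (tensorVec fun r (j : Fin (d r)) => (q r).coeff j) top = 1 :=
      prod_eq_one fun r _ => by simpa [top, (hq r).2] using (hq r).1.coeff_natDegree
    simp [h0] at htop
  · rw [inner_geomVec_tensorVec_coeff _ fun r => by have := hd r; rw [(hq r).2]; omega]
    obtain ⟨r, hr⟩ := hroot s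
    exact prod_eq_zero (mem_univ r) hr

theorem exists_forall_apply_eq_zero_of_isTopSupported [Nontrivial κ] (hd : ∀ r, 2 ≤ d r)
    {ι : Type*} {ψ : ι → EuclideanSpace 𝕜 (∀ r, Fin (d r))} (hψ : Orthonormal 𝕜 ψ)
    (hcases : ∀ s, (∃ c t : 𝕜, ψ s = c • geomVec t) ∨ IsTopSupported (ψ s))
    {s₀ : ι} (hs₀ : IsTopSupported (ψ s₀)) : ∃ i, ∀ s, ψ s i = 0 := by
  let top : ∀ r, Fin (d r) := fun r => ⟨d r - 1, by have := hd r; omega⟩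
  have hne_top (i : ∀ r, Fin (d r)) (hi : i ≠ top) : ∃ q, (i q : ℕ) + 1 < d q := by
    by_contra! h
    exact hi (funext fun r => Fin.ext (by have := (i r).isLt; have := h r; simp [top]; omega))
  have htop₀ : ψ s₀ top ≠ 0 := fun h0 => hψ.ne_zero s₀ <| by
    ext i
    by_cases hi : i = top
    · simp [hi, h0]
    · simp [hs₀ i (hne_top i hi)]
  have htop (s : ι) (hs : s ≠ s₀) : ψ s top = 0 := by
    have h0 : inner 𝕜 (ψ s₀) (ψ s) = 0 := hψ.2 hs.symm
    rw [PiLp.inner_apply, Fintype.sum_eq_single top fun i hi => by simp [hs₀ i (hne_top i hi)]]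
      at h0
    simpa [htop₀] using h0
  obtain ⟨p, q, hpq⟩ := exists_pair_ne κ
  let i₁ : ∀ r, Fin (d r) := update (fun r => ⟨0, by have := hd r; omega⟩) p ⟨1, hd p⟩
  have hi₁ : ∃ q, (i₁ q : ℕ) + 1 < d q :=
    ⟨q, by simp only [i₁, update_of_ne hpq.symm]; have := hd q; omega⟩
  have hweight : weight i₁ ≠ 0 := by
    have := single_le_sum (f := fun r => (i₁ r : ℕ)) (fun _ _ => Nat.zero_le _) (mem_univ p)
    simp [i₁] at this
    exact Nat.one_le_iff_ne_zero.mp this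
  refine ⟨i₁, fun s => ?_⟩
  by_cases hs : s = s₀
  · exact hs ▸ hs₀ i₁ hi₁
  rcases hcases s with ⟨c, t, hct⟩ | hs'
  · have h0 := htop s hs
    rw [hct] at h0 ⊢
    simp only [PiLp.smul_apply, geomVec_apply, smul_eq_mul, mul_eq_zero] at h0 ⊢
    exact h0.imp_right fun ht => by rw [eq_zero_of_pow_eq_zero ht, zero_pow hweight]
  · exact hs' i₁ hi₁

end Multipartite

open Multipartite

/-- `T = S^⊥` contains no unextendable orthonormal product basis: there is no orthonormal
family of fewer than `d₁⋯d_k` product vectors inside `T` whose orthocomplement contains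
no nonzero product vector. -/
theorem stmt_9 (k : ℕ) (hk : 2 ≤ k) (d : Fin k → ℕ) (hd : ∀ r, 2 ≤ d r)
    (u : ℕ → EuclideanSpace ℂ (∀ r, Fin (d r)))
    (hu : ∀ n, u n = ∑ i ∈ Finset.univ.filter
        (fun i : ∀ r, Fin (d r) => ∑ r, (i r : ℕ) = n),
      EuclideanSpace.single i (1 : ℂ)) :
    ¬ ∃ (m : ℕ) (ψ : Fin m → EuclideanSpace ℂ (∀ r, Fin (d r))),
        m < ∏ r, d r ∧
        Orthonormal ℂ ψ ∧
        (∀ s, ψ s ∈ Submodule.span ℂ (u '' Set.Iic (∑ r, (d r - 1)))) ∧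
        (∀ s, ∃ x : ∀ r, Fin (d r) → ℂ, ∀ i : ∀ r, Fin (d r), ψ s i = ∏ r, x r (i r)) ∧
        (∀ v ∈ (Submodule.span ℂ (Set.range ψ))ᗮ,
          (∃ x : ∀ r, Fin (d r) → ℂ, ∀ i : ∀ r, Fin (d r), v i = ∏ r, x r (i r)) → v = 0) := by
  rintro ⟨m, ψ, -, hψ, hT, hprod, hcomp⟩
  have : Nontrivial (Fin k) := Fin.nontrivial_iff_two_le.mpr hk
  have hcases (s : Fin m) : (∃ c t : ℂ, ψ s = c • geomVec t) ∨ IsTopSupported (ψ s) := by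
    obtain ⟨x, hx⟩ := hprod s
    refine eq_smul_geomVec_or_isTopSupported hd (Submodule.span_le.mpr ?_ (hT s)) hx
    rintro _ ⟨n, -, rfl⟩
    rw [hu]
    exact sum_single_mem_levelConstSubmodule n
  obtain ⟨y, hy, hyψ⟩ : ∃ y, tensorVec y ≠ 0 ∧ ∀ s, inner ℂ (ψ s) (tensorVec y) = 0 := by
    by_cases hgeom : ∀ s, ∃ c t : ℂ, ψ s = c • geomVec t
    · choose c t hct using hgeom
      obtain ⟨y, hy, hyt⟩ := exists_tensorVec_ne_zero_forall_inner_geomVec_eq_zero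
        (fun r => by have := hd r; omega) t (card_le_of_orthonormal_smul_geomVec hd hψ hct)
      exact ⟨y, hy, fun s => by rw [hct, inner_smul_left, hyt, mul_zero]⟩
    · obtain ⟨s₀, hs₀⟩ := not_forall.mp hgeom
      obtain ⟨i, hi⟩ := exists_forall_apply_eq_zero_of_isTopSupported hd hψ hcases
        ((hcases s₀).resolve_left hs₀)
      refine ⟨fun r => Pi.single (i r) 1, ?_, fun s => ?_⟩ <;> rw [tensorVec_single]
      · simp
      · simp [EuclideanSpace.inner_single_right, hi s]
  exact hy (hcomp _ (Submodule.mem_orthogonal_span_range hyψ) ⟨y, fun _ => rfl⟩)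
end

section
/- Let 1 ≤ j ≠ j' ≤ k and let M = d_1 ⋯ d_k − (d_1 + ⋯ + d_k) + k − 1 = dim S. Let (ζ_s)_{s=0}^{M−1} be an orthonormal basis of S such that: ζ_0 = (e_{δ_{j'}} − e_{δ_j})/√2; if k ≥ 3, then ζ_2 = [(k−2)(e_{δ_j} + e_{δ_{j'}}) − 2 ∑_{t ≠ j, j'} e_{δ_t}] / √(2k(k−2)); and every ζ_s other than ζ_0 (and ζ_2 when k ≥ 3) is orthogonal to both e_{δ_j} and e_{δ_{j'}}. Let p_0, …, p_{M−1} be nonnegative reals with p_0 + (k−2) p_2 > 0 (for k = 2 this means p_0 > 0). Then the positive operator ρ = ∑_{s=0}^{M−1} p_s |ζ_s⟩⟨ζ_s| is not positive under partial transpose at level j: its matrix satisfies that ρ^{PT_j} is not positive semidefinite. -/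
/-!
Write `0` for the index all of whose coordinates vanish. It lies in `I_0 = {0}`, so
`u_0 = e_0`, and every vector of `S` vanishes at `0`; hence `ρ 0 0 = 0`. A positive
semidefinite matrix with a zero diagonal entry has the whole row vanishing. Since
`ρ^{PT_j} 0 (c with c_j := 1) = ρ δ_j c` whenever `c_j = 0`, positivity of `ρ^{PT_j}` would
force `ρ δ_j δ_t = 0` for all `t ≠ j`. Only `ζ_0` and `ζ_2` meet `δ_j`, and
`ρ δ_j δ_t = -p_2 / k` for `t ∉ {j, j'}`, `ρ δ_j δ_{j'} = -p_0 / 2 + (k - 2) p_2 / (2k)`;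
so `p_0 = p_2 = 0` (`p_0 = 0` when `k = 2`), contradicting `p_0 + (k - 2) p_2 > 0`.
-/

open scoped ComplexOrder
open Matrix Function Finset

lemma Matrix.PosSemidef.apply_eq_zero_of_apply_self_eq_zero {n 𝕜 : Type*} [Fintype n]
    [DecidableEq n] [RCLike 𝕜] {A : Matrix n n 𝕜} (hA : A.PosSemidef) {i : n} (hi : A i i = 0)
    (l : n) : A i l = 0 := by
  have hAi : A *ᵥ Pi.single i 1 = 0 := by
    rw [← hA.dotProduct_mulVec_zero_iff]
    simpa [mulVec_single, dotProduct, Pi.single_apply, apply_ite] using hi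
  have hli : A l i = 0 := by simpa [mulVec_single] using congrFun hAi l
  rw [← hA.1.apply, hli, star_zero]

lemma apply_update_eq_zero_of_partialTranspose_posSemidef {ι 𝕜 : Type*} {κ : ι → Type*}
    [DecidableEq ι] [Fintype (∀ i, κ i)] [DecidableEq (∀ i, κ i)] [RCLike 𝕜]
    {ρ ρPT : Matrix (∀ i, κ i) (∀ i, κ i) 𝕜} {j : ι}
    (hρPT : ∀ a b, ρPT a b = ρ (update a j (b j)) (update b j (a j)))
    (hPSD : ρPT.PosSemidef) {z : ∀ i, κ i} (hz : ρ z z = 0) (x : κ j) {c : ∀ i, κ i}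
    (hc : c j = z j) : ρ (update z j x) c = 0 := by
  have h := hPSD.apply_eq_zero_of_apply_self_eq_zero (i := z)
    (by rwa [hρPT, update_eq_self]) (update c j x)
  rwa [hρPT, update_self, update_idem, ← hc, update_eq_self] at h

lemma EuclideanSpace.sum_single_one_apply_of_injective {ι α : Type*} [DecidableEq ι]
    [DecidableEq α] {f : α → ι} (hf : Injective f) (T : Finset α) (a : α) :
    (∑ t ∈ T, EuclideanSpace.single (f t) (1 : ℂ)) (f a) = if a ∈ T then 1 else 0 := by
  simp [WithLp.ofLp_sum, Finset.sum_apply, Pi.single_apply, hf.eq_iff]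

lemma inv_sqrt_two_mul_self : (Real.sqrt 2 : ℂ)⁻¹ * (Real.sqrt 2 : ℂ)⁻¹ = 1 / 2 := by
  rw [← mul_inv, ← Complex.ofReal_mul, Real.mul_self_sqrt zero_le_two]; norm_num

lemma inv_sqrt_mul_self_mul_self {x : ℝ} (hx : 0 < x) :
    (Real.sqrt x : ℂ)⁻¹ * (Real.sqrt x : ℂ)⁻¹ * x = 1 := by
  rw [← mul_inv, ← Complex.ofReal_mul, Real.mul_self_sqrt hx.le, ← Complex.ofReal_inv,
    ← Complex.ofReal_mul, inv_mul_cancel₀ hx.ne', Complex.ofReal_one]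

lemma two_lt_prod_sub_sum_add {k : ℕ} (hk : 3 ≤ k) {d : Fin k → ℕ} (hd : ∀ r, 2 ≤ d r) :
    2 < (∏ r, d r) - (∑ r, d r) + k - 1 := by
  obtain rfl | hk : k = 3 ∨ 4 ≤ k := by omega
  · rw [Fin.prod_univ_three, Fin.sum_univ_three]
    have h0 := hd 0; have h1 := hd 1; have h2 := hd 2
    have : d 0 + d 1 + d 2 < d 0 * d 1 * d 2 := by
      nlinarith [Nat.mul_le_mul h0 h1, Nat.mul_le_mul (Nat.mul_le_mul h0 h1) h2,
        Nat.mul_le_mul_left (d 0) h2]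
    omega
  · omega

lemma two_mul_mul_sub_two_pos {k : ℕ} (hk : 3 ≤ k) : 0 < 2 * (k : ℝ) * ((k : ℝ) - 2) := by
  have : (3 : ℝ) ≤ k := by exact_mod_cast hk
  nlinarith

section Multipartite

variable {k : ℕ} {d : Fin k → ℕ} {δ : Fin k → ∀ r, Fin (d r)}

lemma injective_of_val_eq_ite (hδ : ∀ t r, (δ t r : ℕ) = if r = t then 1 else 0) :
    Injective δ := by
  intro t t' h
  simpa [hδ, eq_comm] using congrArg (fun i => (i t : ℕ)) h

variable [∀ r, NeZero (d r)]

lemma filter_sum_val_eq_zero :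
    univ.filter (fun i : ∀ r, Fin (d r) => ∑ r, (i r : ℕ) = 0) = {0} := by
  ext i
  simp [sum_eq_zero_iff, funext_iff]

lemma apply_zero_eq_zero_of_mem_orthogonal {u : ℕ → EuclideanSpace ℂ (∀ r, Fin (d r))}
    (hu : ∀ n, u n = ∑ i ∈ univ.filter (fun i : ∀ r, Fin (d r) => ∑ r, (i r : ℕ) = n),
      EuclideanSpace.single i (1 : ℂ))
    {N : ℕ} {v : EuclideanSpace ℂ (∀ r, Fin (d r))}
    (hv : v ∈ (Submodule.span ℂ (u '' Set.Iic N))ᗮ) : v 0 = 0 := by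
  have h := (Submodule.mem_orthogonal _ _).mp hv (u 0)
    (Submodule.subset_span ⟨0, Set.mem_Iic.mpr N.zero_le, rfl⟩)
  rw [hu, filter_sum_val_eq_zero, sum_singleton, EuclideanSpace.inner_single_left] at h
  simpa using h

lemma apply_eq_zero_of_val_eq_ite (hδ : ∀ t r, (δ t r : ℕ) = if r = t then 1 else 0)
    {t r : Fin k} (h : r ≠ t) : δ t r = 0 :=
  Fin.ext (by simp [hδ, h])

lemma update_zero_eq_of_val_eq_ite (hδ : ∀ t r, (δ t r : ℕ) = if r = t then 1 else 0)
    (t : Fin k) : update (0 : ∀ r, Fin (d r)) t (δ t t) = δ t := by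
  funext r
  rcases eq_or_ne r t with rfl | h
  · exact update_self ..
  · rw [update_of_ne h, apply_eq_zero_of_val_eq_ite hδ h]; rfl

lemma apply_unitIndex_eq_zero_of_partialTranspose_posSemidef
    (hδ : ∀ t r, (δ t r : ℕ) = if r = t then 1 else 0) {𝕜 : Type*} [RCLike 𝕜]
    {ρ ρPT : Matrix (∀ r, Fin (d r)) (∀ r, Fin (d r)) 𝕜} {j : Fin k}
    (hρPT : ∀ a b, ρPT a b = ρ (update a j (b j)) (update b j (a j)))
    (hPSD : ρPT.PosSemidef) (hρ0 : ρ 0 0 = 0) {t : Fin k} (ht : t ≠ j) :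
    ρ (δ j) (δ t) = 0 := by
  simpa [update_zero_eq_of_val_eq_ite hδ] using
    apply_update_eq_zero_of_partialTranspose_posSemidef hρPT hPSD hρ0 (δ j j)
      (apply_eq_zero_of_val_eq_ite hδ ht.symm)

end Multipartite

section Entries

variable {ι : Type*} {ζ : ℕ → EuclideanSpace ℂ ι} {p : ℕ → ℝ} {M : ℕ} {ρ : Matrix ι ι ℂ}

lemma apply_eq_sum_of_apply_eq_zero
    (hρ : ∀ a b, ρ a b = ∑ s ∈ range M, (p s : ℂ) * ζ s a * (starRingEnd ℂ) (ζ s b))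
    {E : Finset ℕ} (hE : E ⊆ range M) {a : ι} (ha : ∀ s < M, s ∉ E → ζ s a = 0) (b : ι) :
    ρ a b = ∑ s ∈ E, (p s : ℂ) * ζ s a * (starRingEnd ℂ) (ζ s b) := by
  rw [hρ, ← sum_subset hE fun s hs hsE => by rw [ha s (mem_range.mp hs) hsE]; ring]

lemma apply_eq_add_of_apply_eq_zero (hM : 2 < M)
    (hρ : ∀ a b, ρ a b = ∑ s ∈ range M, (p s : ℂ) * ζ s a * (starRingEnd ℂ) (ζ s b))
    {a : ι} (ha : ∀ s < M, s ≠ 0 → s ≠ 2 → ζ s a = 0) (b : ι) :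
    ρ a b = (p 0 : ℂ) * ζ 0 a * (starRingEnd ℂ) (ζ 0 b)
      + (p 2 : ℂ) * ζ 2 a * (starRingEnd ℂ) (ζ 2 b) := by
  rw [apply_eq_sum_of_apply_eq_zero hρ (E := {0, 2}) ?_ ?_, sum_pair two_ne_zero.symm]
  · intro s hs
    simp only [mem_insert, mem_singleton] at hs
    rcases hs with rfl | rfl <;> simp only [mem_range] <;> omega
  · intro s hs hsE
    exact ha s hs (by rintro rfl; simp at hsE) (by rintro rfl; simp at hsE)

variable [DecidableEq ι] {k : ℕ} {δ : Fin k → ι} {j j' : Fin k}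

lemma apply_unitIndex_unitIndex_eq_neg_half (hδ : Injective δ) (hjj' : j ≠ j') (hM : 0 < M)
    (hρ : ∀ a b, ρ a b = ∑ s ∈ range M, (p s : ℂ) * ζ s a * (starRingEnd ℂ) (ζ s b))
    (hζ₀ : ζ 0 = (Real.sqrt 2 : ℂ)⁻¹ •
      (EuclideanSpace.single (δ j') (1 : ℂ) - EuclideanSpace.single (δ j) (1 : ℂ)))
    (hζ : ∀ s < M, s ≠ 0 → ζ s (δ j) = 0) :
    ρ (δ j) (δ j') = -(p 0 : ℂ) / 2 := by
  rw [apply_eq_sum_of_apply_eq_zero hρ (E := {0}) (by simpa using hM)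
    (fun s hs hs0 => hζ s hs (by simpa using hs0)), sum_singleton, hζ₀]
  simp [hδ.eq_iff, hjj', hjj'.symm]
  linear_combination (-(p 0 : ℂ)) * inv_sqrt_two_mul_self

section ThreeParties

variable (hδ : Injective δ) (hjj' : j ≠ j') (hk : 3 ≤ k) (hM : 2 < M)
  (hρ : ∀ a b, ρ a b = ∑ s ∈ range M, (p s : ℂ) * ζ s a * (starRingEnd ℂ) (ζ s b))
  (hζ₀ : ζ 0 = (Real.sqrt 2 : ℂ)⁻¹ •
      (EuclideanSpace.single (δ j') (1 : ℂ) - EuclideanSpace.single (δ j) (1 : ℂ)))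
  (hζ₂ : ζ 2 = (Real.sqrt (2 * (k : ℝ) * ((k : ℝ) - 2)) : ℂ)⁻¹ •
      (((k : ℂ) - 2) • (EuclideanSpace.single (δ j) (1 : ℂ)
          + EuclideanSpace.single (δ j') (1 : ℂ))
        - (2 : ℂ) • ∑ t ∈ Finset.univ.filter (fun t => t ≠ j ∧ t ≠ j'),
            EuclideanSpace.single (δ t) (1 : ℂ)))
  (hζ : ∀ s < M, s ≠ 0 → s ≠ 2 → ζ s (δ j) = 0)
include hδ hjj' hk hM hρ hζ₀ hζ₂ hζ

lemma apply_unitIndex_of_ne {t : Fin k} (htj : t ≠ j) (htj' : t ≠ j') :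
    ρ (δ j) (δ t) = -(p 2 : ℂ) / k := by
  rw [apply_eq_add_of_apply_eq_zero hM hρ hζ, hζ₀, hζ₂]
  have hνν := inv_sqrt_mul_self_mul_self (two_mul_mul_sub_two_pos hk)
  push_cast at hνν
  have hk0 : (k : ℂ) ≠ 0 := by norm_cast; omega
  simp [-Real.sqrt_mul, map_ofNat, hδ.eq_iff, hjj', htj, htj',
    EuclideanSpace.sum_single_one_apply_of_injective hδ]
  rw [eq_div_iff hk0]
  linear_combination (-(p 2 : ℂ)) * hνν

lemma apply_unitIndex_unitIndex_of_three_le :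
    ρ (δ j) (δ j') = -(p 0 : ℂ) / 2 + (p 2 : ℂ) * (k - 2) / (2 * k) := by
  rw [apply_eq_add_of_apply_eq_zero hM hρ hζ, hζ₀, hζ₂]
  have hνν := inv_sqrt_mul_self_mul_self (two_mul_mul_sub_two_pos hk)
  push_cast at hνν
  have hk0 : (k : ℂ) ≠ 0 := by norm_cast; omega
  simp [-Real.sqrt_mul, map_ofNat, hδ.eq_iff, hjj', hjj'.symm,
    EuclideanSpace.sum_single_one_apply_of_injective hδ]
  set ν : ℂ := (Real.sqrt (2 * (k : ℝ) * ((k : ℝ) - 2)) : ℂ)⁻¹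
  linear_combination (-(p 0 : ℂ)) * inv_sqrt_two_mul_self + ((p 2 : ℂ) * (k - 2) / (2 * k)) * hνν
    - (p 2 : ℂ) * (k - 2) ^ 2 * ν ^ 2 * mul_inv_cancel₀ hk0

lemma eq_zero_of_apply_unitIndex_eq_zero (hrow : ∀ t ≠ j, ρ (δ j) (δ t) = 0) :
    p 0 = 0 ∧ p 2 = 0 := by
  obtain ⟨t, ht⟩ : ({j, j'}ᶜ : Finset (Fin k)).Nonempty := by
    rw [← card_pos, card_compl, Fintype.card_fin]
    have := card_le_two (a := j) (b := j')
    omega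
  simp only [mem_compl, mem_insert, mem_singleton, not_or] at ht
  have hp2 : p 2 = 0 := by
    have h := apply_unitIndex_of_ne hδ hjj' hk hM hρ hζ₀ hζ₂ hζ ht.1 ht.2
    rw [hrow t ht.1, eq_comm, div_eq_zero_iff, neg_eq_zero] at h
    exact_mod_cast h.resolve_right (by norm_cast; omega)
  have h := apply_unitIndex_unitIndex_of_three_le hδ hjj' hk hM hρ hζ₀ hζ₂ hζ
  rw [hrow j' hjj'.symm, hp2, Complex.ofReal_zero] at h
  exact ⟨by exact_mod_cast (by linear_combination 2 * h : (p 0 : ℂ) = 0), hp2⟩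

end ThreeParties

end Entries

theorem stmt_10_general (k : ℕ) (hk : 2 ≤ k) (d : Fin k → ℕ) (hd : ∀ r, 2 ≤ d r)
    (u : ℕ → EuclideanSpace ℂ (∀ r, Fin (d r)))
    (hu : ∀ n, u n = ∑ i ∈ Finset.univ.filter
        (fun i : ∀ r, Fin (d r) => ∑ r, (i r : ℕ) = n),
      EuclideanSpace.single i (1 : ℂ))
    (S : Submodule ℂ (EuclideanSpace ℂ (∀ r, Fin (d r))))
    (hS : S = (Submodule.span ℂ (u '' Set.Iic (∑ r, (d r - 1))))ᗮ)
    (δ : Fin k → ∀ r, Fin (d r))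
    (hδ : ∀ t r, (δ t r : ℕ) = if r = t then 1 else 0)
    (j j' : Fin k) (hjj' : j ≠ j')
    (M : ℕ) (hM : M = (∏ r, d r) - (∑ r, d r) + k - 1)
    (ζ : ℕ → EuclideanSpace ℂ (∀ r, Fin (d r)))
    (hζspan : Submodule.span ℂ (ζ '' Set.Iio M) = S)
    (hζ₀ : ζ 0 = (Real.sqrt 2 : ℂ)⁻¹ •
      (EuclideanSpace.single (δ j') (1 : ℂ) - EuclideanSpace.single (δ j) (1 : ℂ)))
    (hζ₂ : 3 ≤ k → ζ 2 = (Real.sqrt (2 * (k : ℝ) * ((k : ℝ) - 2)) : ℂ)⁻¹ •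
      (((k : ℂ) - 2) • (EuclideanSpace.single (δ j) (1 : ℂ)
          + EuclideanSpace.single (δ j') (1 : ℂ))
        - (2 : ℂ) • ∑ t ∈ Finset.univ.filter (fun t => t ≠ j ∧ t ≠ j'),
            EuclideanSpace.single (δ t) (1 : ℂ)))
    (hζrest : ∀ s < M, s ≠ 0 → (3 ≤ k → s ≠ 2) →
      (inner ℂ (EuclideanSpace.single (δ j) (1 : ℂ)) (ζ s) : ℂ) = 0 ∧
      (inner ℂ (EuclideanSpace.single (δ j') (1 : ℂ)) (ζ s) : ℂ) = 0)
    (p : ℕ → ℝ)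
    (hppos : 0 < p 0 + ((k : ℝ) - 2) * p 2)
    (ρ : Matrix (∀ r, Fin (d r)) (∀ r, Fin (d r)) ℂ)
    (hρ : ∀ a b, ρ a b = ∑ s ∈ Finset.range M,
      (p s : ℂ) * ζ s a * (starRingEnd ℂ) (ζ s b))
    (ρPT : Matrix (∀ r, Fin (d r)) (∀ r, Fin (d r)) ℂ)
    (hρPT : ∀ a b, ρPT a b =
      ρ (Function.update a j (b j)) (Function.update b j (a j))) :
    ¬ ρPT.PosSemidef := by
  intro hPSD
  have : ∀ r, NeZero (d r) := fun r => ⟨by have := hd r; omega⟩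
  have hρ0 : ρ 0 0 = 0 := by
    rw [apply_eq_sum_of_apply_eq_zero hρ (empty_subset _) (fun s hs _ => ?_), sum_empty]
    have hmem : ζ s ∈ S := hζspan ▸ Submodule.subset_span ⟨s, hs, rfl⟩
    exact apply_zero_eq_zero_of_mem_orthogonal hu (hS ▸ hmem)
  have hrow : ∀ t ≠ j, ρ (δ j) (δ t) = 0 := fun t =>
    apply_unitIndex_eq_zero_of_partialTranspose_posSemidef hδ hρPT hPSD hρ0
  have hζδ : ∀ s < M, s ≠ 0 → (3 ≤ k → s ≠ 2) → ζ s (δ j) = 0 := fun s hs h0 h2 => by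
    simpa [EuclideanSpace.inner_single_left] using (hζrest s hs h0 h2).1
  rcases lt_or_ge k 3 with hk3 | hk3
  · have h := apply_unitIndex_unitIndex_eq_neg_half (injective_of_val_eq_ite hδ) hjj'
      (by omega) hρ hζ₀ fun s hs h0 => hζδ s hs h0 (by omega)
    rw [hrow j' hjj'.symm] at h
    have hp0 : p 0 = 0 := by exact_mod_cast (by linear_combination 2 * h : (p 0 : ℂ) = 0)
    have hk2 : (k : ℝ) = 2 := by norm_cast; omega
    simp [hp0, hk2] at hppos
  · obtain ⟨hp0, hp2⟩ := eq_zero_of_apply_unitIndex_eq_zero (injective_of_val_eq_ite hδ) hjj'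
      hk3 (hM ▸ two_lt_prod_sub_sum_add hk3 hd) hρ hζ₀ (hζ₂ hk3)
      (fun s hs h0 h2 => hζδ s hs h0 fun _ => h2) hrow
    simp [hp0, hp2] at hppos

/-- Positive operators `ρ = ∑ p_s |ζ_s⟩⟨ζ_s|` built from the special orthonormal basis
`(ζ_s)` of `S`, with `p_s ≥ 0` and `p_0 + (k−2)p_2 > 0`, are not positive under partial
transpose at level `j`. -/
theorem stmt_10 (k : ℕ) (hk : 2 ≤ k) (d : Fin k → ℕ) (hd : ∀ r, 2 ≤ d r)
    (u : ℕ → EuclideanSpace ℂ (∀ r, Fin (d r)))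
    (hu : ∀ n, u n = ∑ i ∈ Finset.univ.filter
        (fun i : ∀ r, Fin (d r) => ∑ r, (i r : ℕ) = n),
      EuclideanSpace.single i (1 : ℂ))
    (S : Submodule ℂ (EuclideanSpace ℂ (∀ r, Fin (d r))))
    (hS : S = (Submodule.span ℂ (u '' Set.Iic (∑ r, (d r - 1))))ᗮ)
    (δ : Fin k → ∀ r, Fin (d r))
    (hδ : ∀ t r, (δ t r : ℕ) = if r = t then 1 else 0)
    (j j' : Fin k) (hjj' : j ≠ j')
    (M : ℕ) (hM : M = (∏ r, d r) - (∑ r, d r) + k - 1)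
    (ζ : ℕ → EuclideanSpace ℂ (∀ r, Fin (d r)))
    (hζo : Orthonormal ℂ (fun s : Fin M => ζ (s : ℕ)))
    (hζspan : Submodule.span ℂ (ζ '' Set.Iio M) = S)
    (hζ₀ : ζ 0 = (Real.sqrt 2 : ℂ)⁻¹ •
      (EuclideanSpace.single (δ j') (1 : ℂ) - EuclideanSpace.single (δ j) (1 : ℂ)))
    (hζ₂ : 3 ≤ k → ζ 2 = (Real.sqrt (2 * (k : ℝ) * ((k : ℝ) - 2)) : ℂ)⁻¹ •
      (((k : ℂ) - 2) • (EuclideanSpace.single (δ j) (1 : ℂ)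
          + EuclideanSpace.single (δ j') (1 : ℂ))
        - (2 : ℂ) • ∑ t ∈ Finset.univ.filter (fun t => t ≠ j ∧ t ≠ j'),
            EuclideanSpace.single (δ t) (1 : ℂ)))
    (hζrest : ∀ s < M, s ≠ 0 → (3 ≤ k → s ≠ 2) →
      (inner ℂ (EuclideanSpace.single (δ j) (1 : ℂ)) (ζ s) : ℂ) = 0 ∧
      (inner ℂ (EuclideanSpace.single (δ j') (1 : ℂ)) (ζ s) : ℂ) = 0)
    (p : ℕ → ℝ) (hp : ∀ s < M, 0 ≤ p s)
    (hppos : 0 < p 0 + ((k : ℝ) - 2) * p 2)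
    (ρ : Matrix (∀ r, Fin (d r)) (∀ r, Fin (d r)) ℂ)
    (hρ : ∀ a b, ρ a b = ∑ s ∈ Finset.range M,
      (p s : ℂ) * ζ s a * (starRingEnd ℂ) (ζ s b))
    (ρPT : Matrix (∀ r, Fin (d r)) (∀ r, Fin (d r)) ℂ)
    (hρPT : ∀ a b, ρPT a b =
      ρ (Function.update a j (b j)) (Function.update b j (a j))) :
    ¬ ρPT.PosSemidef :=
  stmt_10_general k hk d hd u hu S hS δ hδ j j' hjj' M hM ζ hζspan hζ₀ hζ₂ hζrest p hppos ρ hρ ρPT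
    hρPT
end

section
/- If E is a subspace of H containing no nonzero product vector, then dim E ≤ d_1 d_2 ⋯ d_k − (d_1 + d_2 + ⋯ + d_k) + k − 1. -/
open MvPolynomial Finset

section General

variable {σ : Type*} {M : Type*} [AddCancelCommMonoid M]

/-- Projection of a product with a homogeneous factor. -/
lemma wHC_mul_homog (w : σ → M) (f h : MvPolynomial σ ℂ) (e m : M)
    (hh : IsWeightedHomogeneous w h e) :
    weightedHomogeneousComponent w (m + e) (f * h)
      = weightedHomogeneousComponent w m f * h := by
  classical
  conv_lhs => rw [← support_sum_monomial_coeff f]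
  rw [Finset.sum_mul, map_sum]
  conv_rhs => rw [← support_sum_monomial_coeff f]
  rw [map_sum, Finset.sum_mul]
  refine Finset.sum_congr rfl fun δ _ => ?_
  by_cases hw : Finsupp.weight w δ = m
  · rw [((isWeightedHomogeneous_monomial w δ _ hw).mul hh).weightedHomogeneousComponent_same,
      (isWeightedHomogeneous_monomial w δ _ hw).weightedHomogeneousComponent_same]
  · rw [IsWeightedHomogeneous.weightedHomogeneousComponent_ne _
      ((isWeightedHomogeneous_monomial w δ _ rfl).mul hh)
        (fun hc => hw (add_right_cancel hc).symm),
      IsWeightedHomogeneous.weightedHomogeneousComponent_ne _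
        (isWeightedHomogeneous_monomial w δ _ rfl) (fun hc => hw hc.symm), zero_mul]

lemma multiset_map_finset_sum {α β γ : Type*} (s : Finset γ) (f : γ → Multiset α) (φ : α → β) :
    (∑ x ∈ s, f x).map φ = ∑ x ∈ s, (f x).map φ := by
  classical
  induction s using Finset.induction_on with
  | empty => simp
  | insert _ _ h ih => rw [Finset.sum_insert h, Finset.sum_insert h, Multiset.map_add, ih]

lemma multiset_card_finset_sum {α γ : Type*} (s : Finset γ) (f : γ → Multiset α) :
    Multiset.card (∑ x ∈ s, f x) = ∑ x ∈ s, Multiset.card (f x) := by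
  classical
  induction s using Finset.induction_on with
  | empty => simp
  | insert _ _ h ih => rw [Finset.sum_insert h, Finset.sum_insert h, Multiset.card_add, ih]

lemma multiset_sum_finset_sum {α γ : Type*} [AddCommMonoid α] (s : Finset γ)
    (f : γ → Multiset α) : (∑ x ∈ s, f x).sum = ∑ x ∈ s, (f x).sum := by
  classical
  induction s using Finset.induction_on with
  | empty => simp
  | insert _ _ h ih => rw [Finset.sum_insert h, Finset.sum_insert h, Multiset.sum_add, ih]

end General

namespace Wallach

variable {k : ℕ} (d : Fin k → ℕ)

noncomputable def mexp (i : ∀ r, Fin (d r)) : (Σ r : Fin k, Fin (d r)) →₀ ℕ :=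
  ∑ r, Finsupp.single ⟨r, i r⟩ 1

noncomputable def tmon (i : ∀ r, Fin (d r)) : MvPolynomial (Σ r : Fin k, Fin (d r)) ℂ :=
  monomial (mexp d i) 1

def wt : (Σ r : Fin k, Fin (d r)) → (Fin k → ℕ) := fun s => Pi.single s.1 1

lemma mexp_apply (i : ∀ r, Fin (d r)) (r : Fin k) (v : Fin (d r)) :
    mexp d i ⟨r, v⟩ = if i r = v then 1 else 0 := by
  classical
  rw [mexp, Finsupp.finset_sum_apply]
  rw [Finset.sum_eq_single r]
  · rw [Finsupp.single_apply]
    by_cases h : i r = v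
    · subst h; simp
    · rw [if_neg, if_neg h]
      intro hc
      exact h (eq_of_heq (Sigma.mk.inj_iff.mp hc).2)
  · intro b _ hb
    rw [Finsupp.single_apply, if_neg]
    intro hc
    exact hb (Sigma.mk.inj_iff.mp hc).1
  · intro h; exact absurd (Finset.mem_univ r) h

lemma weight_apply (δ : (Σ r : Fin k, Fin (d r)) →₀ ℕ) (r : Fin k) :
    Finsupp.weight (wt d) δ r = ∑ v : Fin (d r), δ ⟨r, v⟩ := by
  classical
  rw [Finsupp.weight_apply, Finsupp.sum_fintype]
  · rw [Finset.sum_apply]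
    rw [Finset.univ_sigma_univ.symm, Finset.sum_sigma]
    rw [Finset.sum_eq_single r]
    · apply Finset.sum_congr rfl
      intro v _
      simp [wt, Pi.single_apply]
    · intro b _ hb
      apply Finset.sum_eq_zero
      intro v _
      simp [wt, Pi.single_apply, hb]
    · intro h; exact absurd (Finset.mem_univ r) h
  · intro s; simp

lemma weight_mexp (i : ∀ r, Fin (d r)) :
    Finsupp.weight (wt d) (mexp d i) = fun _ => 1 := by
  classical
  funext r
  rw [weight_apply]
  simp [mexp_apply]

lemma mexp_swap (i j : ∀ r, Fin (d r)) (r : Fin k) :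
    mexp d i + mexp d j
      = mexp d (Function.update i r (j r)) + mexp d (Function.update j r (i r)) := by
  classical
  rw [mexp, mexp, mexp, mexp, ← Finset.sum_add_distrib, ← Finset.sum_add_distrib]
  apply Finset.sum_congr rfl
  intro r' _
  by_cases h : r' = r
  · subst h
    rw [Function.update_self, Function.update_self]
    exact add_comm _ _
  · rw [Function.update_of_ne h, Function.update_of_ne h]

lemma tmon_swap (i j : ∀ r, Fin (d r)) (r : Fin k) :
    tmon d i * tmon d j
      = tmon d (Function.update i r (j r)) * tmon d (Function.update j r (i r)) := by
  rw [tmon, tmon, tmon, tmon, monomial_mul, monomial_mul, mexp_swap d i j r]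

lemma multiset_tmon_prod (g : Multiset (∀ r, Fin (d r))) :
    (g.map (tmon d)).prod = monomial ((g.map (mexp d)).sum) 1 := by
  classical
  induction g using Multiset.induction with
  | empty => simp [MvPolynomial.monomial_zero', MvPolynomial.C_1]
  | cons a g ih =>
      rw [Multiset.map_cons, Multiset.prod_cons, Multiset.map_cons, Multiset.sum_cons, ih,
        tmon, monomial_mul, one_mul]

lemma isWeightedHomogeneous_tmon (i : ∀ r, Fin (d r)) :
    IsWeightedHomogeneous (wt d) (tmon d i) (fun _ => 1) :=
  isWeightedHomogeneous_monomial _ _ _ (weight_mexp d i)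



/-- A function satisfying all quadratic Segre (swap) relations is a product vector. -/
lemma exists_product_rep (hk : 0 < k) (v : (∀ r, Fin (d r)) → ℂ)
    (h : ∀ i j (r : Fin k),
      v i * v j = v (Function.update i r (j r)) * v (Function.update j r (i r))) :
    ∃ x : ∀ r, Fin (d r) → ℂ, ∀ i, v i = ∏ r, x r (i r) := by
  classical
  by_cases hv : ∀ i, v i = 0
  · refine ⟨fun r s => 0, fun i => ?_⟩
    rw [hv i]
    rw [Finset.prod_const]
    rw [zero_pow]
    rw [Finset.card_univ, Fintype.card_fin]
    omega
  · push_neg at hv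
    obtain ⟨i₀, hi₀⟩ := hv
    set z := v i₀ with hz
    -- the mixed index
    let mix : ℕ → (∀ r, Fin (d r)) → (∀ r, Fin (d r)) :=
      fun m i r => if (r : ℕ) < m then i r else i₀ r
    have aux : ∀ m, m ≤ k → ∀ i, v (mix m i) * z ^ m
        = z * ∏ r ∈ univ.filter (fun r : Fin k => (r : ℕ) < m), v (Function.update i₀ r (i r)) := by
      intro m
      induction m with
      | zero =>
          intro _ i
          have h1 : mix 0 i = i₀ := by
            funext r; simp [mix]
          have h2 : univ.filter (fun r : Fin k => (r : ℕ) < 0) = ∅ := by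
            apply Finset.filter_false_of_mem; intro r _; omega
          rw [h1, h2, pow_zero, mul_one, Finset.prod_empty, mul_one]
      | succ m ih =>
          intro hm i
          have hmk : m < k := hm
          set rm : Fin k := ⟨m, hmk⟩ with hrm
          have key := h (mix (m+1) i) i₀ rm
          have e1 : Function.update (mix (m+1) i) rm (i₀ rm) = mix m i := by
            funext r
            by_cases hr : r = rm
            · subst hr
              rw [Function.update_self]
              simp only [mix, hrm]
              rw [if_neg (by omega)]
            · rw [Function.update_of_ne hr]
              have : (r : ℕ) ≠ m := by
                intro hc; exact hr (Fin.ext hc)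
              simp only [mix]
              by_cases h2 : (r : ℕ) < m
              · rw [if_pos (by omega), if_pos h2]
              · rw [if_neg (by omega), if_neg h2]
          have e2 : (mix (m+1) i) rm = i rm := by
            simp only [mix, hrm]
            rw [if_pos (by omega)]
          rw [e1, e2] at key
          -- filter identity
          have e3 : univ.filter (fun r : Fin k => (r : ℕ) < m + 1)
              = insert rm (univ.filter (fun r : Fin k => (r : ℕ) < m)) := by
            ext r
            simp only [Finset.mem_filter, Finset.mem_insert, Finset.mem_univ, true_and]
            constructor
            · intro hr
              by_cases h2 : (r : ℕ) = m
              · exact Or.inl (Fin.ext h2)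
              · exact Or.inr (by omega)
            · rintro (rfl | hr)
              · simp [hrm]
              · omega
          have e4 : rm ∉ univ.filter (fun r : Fin k => (r : ℕ) < m) := by
            simp [hrm]
          calc v (mix (m+1) i) * z ^ (m+1)
              = (v (mix (m+1) i) * z) * z ^ m := by ring
            _ = (v (mix m i) * v (Function.update i₀ rm (i rm))) * z ^ m := by rw [key]
            _ = (v (mix m i) * z ^ m) * v (Function.update i₀ rm (i rm)) := by ring
            _ = (z * ∏ r ∈ univ.filter (fun r : Fin k => (r : ℕ) < m),
                  v (Function.update i₀ r (i r))) * v (Function.update i₀ rm (i rm)) := by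
                  rw [ih (le_of_lt hm) i]
            _ = z * ∏ r ∈ univ.filter (fun r : Fin k => (r : ℕ) < m + 1),
                  v (Function.update i₀ r (i r)) := by
                  rw [e3, Finset.prod_insert e4]; ring
    -- at m = k
    have A : ∀ i, v i * z ^ k = z * ∏ r, v (Function.update i₀ r (i r)) := by
      intro i
      have h1 : mix k i = i := by
        funext r; simp [mix, r.isLt]
      have h2 : univ.filter (fun r : Fin k => (r : ℕ) < k) = univ := by
        apply Finset.filter_true_of_mem; intro r _; exact r.isLt
      have := aux k le_rfl i
      rwa [h1, h2] at this
    -- assemble x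
    set r₀ : Fin k := ⟨0, hk⟩ with hr₀
    have hz0 : z ≠ 0 := hi₀
    have hzp : z ^ (k-1) ≠ 0 := pow_ne_zero _ hz0
    set x : ∀ r, Fin (d r) → ℂ := fun r s =>
      if r = r₀ then v (Function.update i₀ r s) / z ^ (k-1)
      else v (Function.update i₀ r s) with hx
    refine ⟨x, fun i => ?_⟩
    have expand : ∏ r, x r (i r)
        = (v (Function.update i₀ r₀ (i r₀)) / z ^ (k-1))
          * ∏ r ∈ univ.erase r₀, v (Function.update i₀ r (i r)) := by
      rw [← Finset.mul_prod_erase univ (fun r => x r (i r)) (Finset.mem_univ r₀)]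
      simp only [hx]
      rw [if_true]
      congr 1
      refine Finset.prod_congr rfl fun r hr => ?_
      rw [if_neg (Finset.ne_of_mem_erase hr)]
    have hfull : v (Function.update i₀ r₀ (i r₀))
          * ∏ r ∈ univ.erase r₀, v (Function.update i₀ r (i r))
        = ∏ r, v (Function.update i₀ r (i r)) :=
      Finset.mul_prod_erase univ (fun r => v (Function.update i₀ r (i r))) (Finset.mem_univ r₀)
    have hk1 : z ^ k = z * z ^ (k - 1) := by
      conv_lhs => rw [show k = 1 + (k - 1) by omega]
      rw [pow_add, pow_one]
    have hPfull : ∏ r, v (Function.update i₀ r (i r)) = v i * z ^ (k-1) := by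
      have h1 : z * (v i * z ^ (k-1)) = z * ∏ r, v (Function.update i₀ r (i r)) := by
        calc z * (v i * z ^ (k-1)) = v i * z ^ k := by rw [hk1]; ring
        _ = z * ∏ r, v (Function.update i₀ r (i r)) := A i
      exact (mul_left_cancel₀ hz0 h1).symm
    rw [expand, div_mul_eq_mul_div, hfull, hPfull, mul_div_cancel_right₀ _ hzp]


variable {c : ℕ}

/-- span of products of `p` Segre monomials -/
noncomputable def Wp (p : ℕ) : Submodule ℂ (MvPolynomial (Σ r : Fin k, Fin (d r)) ℂ) :=
  Submodule.span ℂ {f | ∃ g : Multiset (∀ r, Fin (d r)),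
    Multiset.card g = p ∧ f = (g.map (tmon d)).prod}

lemma gen_mem_Wp {p : ℕ} (g : Multiset (∀ r, Fin (d r))) (hg : Multiset.card g = p) :
    (g.map (tmon d)).prod ∈ Wp d p :=
  Submodule.subset_span ⟨g, hg, rfl⟩

lemma tmon_mul_mem_Wp {p : ℕ} (i : ∀ r, Fin (d r)) {f} (hf : f ∈ Wp d p) :
    tmon d i * f ∈ Wp d (p + 1) := by
  induction hf using Submodule.span_induction with
  | mem x hx =>
      obtain ⟨g, hg, rfl⟩ := hx
      rw [show tmon d i * (Multiset.map (tmon d) g).prod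
          = ((Multiset.map (tmon d) (i ::ₘ g))).prod by
        rw [Multiset.map_cons, Multiset.prod_cons]]
      exact gen_mem_Wp d _ (by simp [hg])
  | zero => rw [mul_zero]; exact Submodule.zero_mem _
  | add x y hx hy ihx ihy => rw [mul_add]; exact Submodule.add_mem _ ihx ihy
  | smul a x hx ih => rw [mul_smul_comm]; exact Submodule.smul_mem _ a ih

lemma mul_gen_mem_Wp {p q : ℕ} {f} (hf : f ∈ Wp d p) (g : Multiset (∀ r, Fin (d r)))
    (hg : Multiset.card g = q) : f * (g.map (tmon d)).prod ∈ Wp d (p + q) := by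
  induction hf using Submodule.span_induction with
  | mem x hx =>
      obtain ⟨g', hg', rfl⟩ := hx
      rw [show (Multiset.map (tmon d) g').prod * (Multiset.map (tmon d) g).prod
          = ((Multiset.map (tmon d) (g' + g))).prod by
        rw [Multiset.map_add, Multiset.prod_add]]
      exact gen_mem_Wp d _ (by simp [hg, hg'])
  | zero => rw [zero_mul]; exact Submodule.zero_mem _
  | add x y hx hy ihx ihy => rw [add_mul]; exact Submodule.add_mem _ ihx ihy
  | smul a x hx ih => rw [smul_mul_assoc]; exact Submodule.smul_mem _ a ih

/-- a monomial whose weight is balanced of total block-degree `p` is a product of `p`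
Segre monomials (up to scalar) -/
lemma monomial_mem_Wp : ∀ (p : ℕ) (δ : (Σ r : Fin k, Fin (d r)) →₀ ℕ) (a : ℂ),
    Finsupp.weight (wt d) δ = (fun _ => p) → monomial δ a ∈ Wp d p := by
  intro p
  induction p with
  | zero =>
      intro δ a hδ
      have hδ0 : δ = 0 := by
        ext s
        rcases s with ⟨r, v⟩
        have h1 : Finsupp.weight (wt d) δ r = 0 := by rw [hδ]
        rw [weight_apply] at h1
        have := Finset.sum_eq_zero_iff.mp h1 v (Finset.mem_univ v)
        simpa using this
      subst hδ0
      have h1 : (monomial (0 : (Σ r : Fin k, Fin (d r)) →₀ ℕ)) a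
          = a • ((Multiset.map (tmon d) 0).prod) := by
        simp only [Multiset.map_zero, Multiset.prod_zero, smul_eq_C_mul, mul_one]
        rw [MvPolynomial.C_apply]
      rw [h1]
      exact Submodule.smul_mem _ _ (gen_mem_Wp d 0 rfl)
  | succ p ih =>
      intro δ a hδ
      classical
      -- choose an index in every block
      have hch : ∀ r : Fin k, ∃ v : Fin (d r), δ ⟨r, v⟩ ≠ 0 := by
        intro r
        by_contra hc
        push_neg at hc
        have h1 : Finsupp.weight (wt d) δ r = 0 := by
          rw [weight_apply]
          exact Finset.sum_eq_zero fun v _ => hc v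
        rw [hδ] at h1
        simp at h1
      set i : ∀ r, Fin (d r) := fun r => Classical.choose (hch r) with hi
      have hipos : ∀ r, δ ⟨r, i r⟩ ≠ 0 := fun r => Classical.choose_spec (hch r)
      have hle : mexp d i ≤ δ := by
        rw [Finsupp.le_def]
        rintro ⟨r, v⟩
        rw [mexp_apply]
        by_cases h : i r = v
        · rw [if_pos h]; subst h; exact Nat.one_le_iff_ne_zero.mpr (hipos r)
        · rw [if_neg h]; exact Nat.zero_le _
      have hsplit : mexp d i + (δ - mexp d i) = δ := add_tsub_cancel_of_le hle
      have hw' : Finsupp.weight (wt d) (δ - mexp d i) = (fun _ => p) := by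
        funext r
        have h1 : Finsupp.weight (wt d) (mexp d i) r
            + Finsupp.weight (wt d) (δ - mexp d i) r = Finsupp.weight (wt d) δ r := by
          rw [← Pi.add_apply, ← map_add, hsplit]
        rw [hδ, weight_mexp] at h1
        have h2 : 1 + Finsupp.weight (wt d) (δ - mexp d i) r = p + 1 := by simpa using h1
        show Finsupp.weight (wt d) (δ - mexp d i) r = p
        omega
      have hmono : (monomial δ) a = tmon d i * (monomial (δ - mexp d i)) a := by
        rw [tmon, monomial_mul, one_mul, hsplit]
      rw [hmono]
      exact tmon_mul_mem_Wp d i (ih _ a hw')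

lemma homog_mem_Wp {p : ℕ} {f : MvPolynomial (Σ r : Fin k, Fin (d r)) ℂ}
    (hf : IsWeightedHomogeneous (wt d) f (fun _ => p)) : f ∈ Wp d p := by
  rw [← support_sum_monomial_coeff f]
  refine Submodule.sum_mem _ fun δ hδ => ?_
  exact monomial_mem_Wp d p δ _ (hf (MvPolynomial.mem_support_iff.mp hδ))

lemma isWeightedHomogeneous_tmon_pow (i : ∀ r, Fin (d r)) (N : ℕ) :
    IsWeightedHomogeneous (wt d) (tmon d i ^ N) (fun _ => N) := by
  have h1 : tmon d i ^ N = monomial (N • mexp d i) ((1:ℂ) ^ N) := by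
    rw [tmon, monomial_pow]
  rw [h1]
  apply isWeightedHomogeneous_monomial
  rw [map_nsmul, weight_mexp]
  funext r
  simp

lemma exists_homog_cert (L : Fin c → MvPolynomial (Σ r : Fin k, Fin (d r)) ℂ)
    (hL : ∀ b, IsWeightedHomogeneous (wt d) (L b) (fun _ => 1)) {N : ℕ} (hN : 1 ≤ N)
    (i : ∀ r, Fin (d r)) (hmem : tmon d i ^ N ∈ Ideal.span (Set.range L)) :
    ∃ g : Fin c → MvPolynomial (Σ r : Fin k, Fin (d r)) ℂ,
      (∀ b, g b ∈ Wp d (N - 1)) ∧ tmon d i ^ N = ∑ b, g b * L b := by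
  classical
  obtain ⟨gg, hgg⟩ := (Submodule.mem_span_range_iff_exists_fun (MvPolynomial (Σ r : Fin k, Fin (d r)) ℂ)).mp hmem
  refine ⟨fun b => weightedHomogeneousComponent (wt d) (fun _ => N - 1) (gg b),
    fun b => homog_mem_Wp d (weightedHomogeneousComponent_isWeightedHomogeneous _ _), ?_⟩
  have key := congrArg (weightedHomogeneousComponent (wt d) (fun _ => N)) hgg
  rw [map_sum, (isWeightedHomogeneous_tmon_pow d i N).weightedHomogeneousComponent_same] at key
  rw [← key]
  refine Finset.sum_congr rfl fun b _ => ?_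
  rw [smul_eq_mul]
  have hsum : (fun _ : Fin k => N - 1) + (fun _ : Fin k => 1) = (fun _ : Fin k => N) := by
    funext r; show N - 1 + 1 = N; omega
  rw [← hsum, wHC_mul_homog (wt d) (gg b) (L b) _ _ (hL b)]

/-- the target space of the descent: combinations of products of at most `M₀` Segre
monomials multiplied by monomials in the linear forms `L`, of bounded total degree -/
noncomputable def Usp (L : Fin c → MvPolynomial (Σ r : Fin k, Fin (d r)) ℂ) (M₀ p : ℕ) :
    Submodule ℂ (MvPolynomial (Σ r : Fin k, Fin (d r)) ℂ) :=
  Submodule.span ℂ {f | ∃ (mβ : Multiset (Fin c)) (g : Multiset (∀ r, Fin (d r))),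
    Multiset.card mβ + Multiset.card g ≤ p ∧ Multiset.card g ≤ M₀ ∧
    f = (mβ.map L).prod * (g.map (tmon d)).prod}

lemma Usp_mono (L : Fin c → MvPolynomial (Σ r : Fin k, Fin (d r)) ℂ) (M₀ : ℕ) {p p' : ℕ}
    (h : p ≤ p') : Usp d L M₀ p ≤ Usp d L M₀ p' := by
  apply Submodule.span_mono
  rintro f ⟨mβ, g, h1, h2, rfl⟩
  exact ⟨mβ, g, h1.trans h, h2, rfl⟩

lemma L_mul_mem_Usp (L : Fin c → MvPolynomial (Σ r : Fin k, Fin (d r)) ℂ) (M₀ p : ℕ)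
    (b : Fin c) {f} (hf : f ∈ Usp d L M₀ p) : L b * f ∈ Usp d L M₀ (p + 1) := by
  induction hf using Submodule.span_induction with
  | mem x hx =>
      obtain ⟨mβ, g, h1, h2, rfl⟩ := hx
      refine Submodule.subset_span ⟨b ::ₘ mβ, g, ?_, h2, ?_⟩
      · simp only [Multiset.card_cons]; omega
      · rw [Multiset.map_cons, Multiset.prod_cons, mul_assoc]
  | zero => rw [mul_zero]; exact Submodule.zero_mem _
  | add x y hx hy ihx ihy => rw [mul_add]; exact Submodule.add_mem _ ihx ihy
  | smul a x hx ih => rw [mul_smul_comm]; exact Submodule.smul_mem _ a ih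

/-- The descent: powers of Segre monomials lying in the ideal generated by the `L b`
let us rewrite every product of Segre monomials in terms of bounded products. -/
lemma descent (L : Fin c → MvPolynomial (Σ r : Fin k, Fin (d r)) ℂ) {N : ℕ} (hN : 1 ≤ N)
    (hD : 1 ≤ Fintype.card (∀ r, Fin (d r)))
    (cert : ∀ i : ∀ r, Fin (d r), ∃ g : Fin c → MvPolynomial (Σ r : Fin k, Fin (d r)) ℂ,
      (∀ b, g b ∈ Wp d (N - 1)) ∧ tmon d i ^ N = ∑ b, g b * L b) :
    ∀ p, Wp d p ≤ Usp d L (Fintype.card (∀ r, Fin (d r)) * (N - 1)) p := by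
  classical
  set D := Fintype.card (∀ r, Fin (d r)) with hD'
  set M₀ := D * (N - 1) with hM₀
  intro p
  induction p using Nat.strong_induction_on with
  | _ p ih =>
    rw [Wp, Submodule.span_le]
    rintro f ⟨g, hcard, rfl⟩
    by_cases hp : p ≤ M₀
    · exact Submodule.subset_span ⟨0, g, by simp [hcard], by omega, by simp⟩
    · push_neg at hp
      -- pigeonhole: some index occurs at least N times in g
      have hpig : ∃ i, N ≤ Multiset.count i g := by
        by_contra hc
        push_neg at hc
        have h1 : Multiset.card g ≤ M₀ := by
          rw [← Multiset.toFinset_sum_count_eq]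
          calc ∑ a ∈ g.toFinset, Multiset.count a g ≤ ∑ a ∈ g.toFinset, (N - 1) :=
                Finset.sum_le_sum fun a _ => by have := hc a; omega
            _ = g.toFinset.card * (N - 1) := by rw [Finset.sum_const, smul_eq_mul]
            _ ≤ D * (N - 1) := Nat.mul_le_mul_right _ (Finset.card_le_univ _)
        omega
      obtain ⟨i, hi⟩ := hpig
      obtain ⟨g₂, hg₂⟩ := Multiset.le_iff_exists_add.mp (Multiset.le_count_iff_replicate_le.mp hi)
      have hcard₂ : Multiset.card g₂ = p - N := by
        have := congrArg Multiset.card hg₂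
        simp only [Multiset.card_add, Multiset.card_replicate] at this
        omega
      have hNp : N ≤ p := by
        have : N - 1 ≤ M₀ := by
          rw [hM₀]; exact Nat.le_mul_of_pos_left _ (by omega)
        omega
      obtain ⟨gg, hggW, hggeq⟩ := cert i
      have hsplit : (g.map (tmon d)).prod
          = (∑ b, gg b * L b) * (g₂.map (tmon d)).prod := by
        rw [hg₂, Multiset.map_add, Multiset.prod_add, Multiset.map_replicate,
          Multiset.prod_replicate, hggeq]
      rw [hsplit, Finset.sum_mul]
      refine Submodule.sum_mem _ fun b _ => ?_
      have h1 : gg b * L b * (g₂.map (tmon d)).prod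
          = L b * (gg b * (g₂.map (tmon d)).prod) := by ring
      rw [h1]
      have h2 : gg b * (g₂.map (tmon d)).prod ∈ Wp d (N - 1 + (p - N)) :=
        mul_gen_mem_Wp d (hggW b) g₂ hcard₂
      have h3 : N - 1 + (p - N) = p - 1 := by omega
      rw [h3] at h2
      have h4 := ih (p - 1) (by omega) h2
      have h5 := L_mul_mem_Usp d L M₀ (p - 1) b h4
      have h6 : p - 1 + 1 = p := by omega
      rwa [h6] at h5

section Counting

variable (hd : ∀ r, 1 ≤ d r)

/-- the base point `(0,…,0)` -/
def base : ∀ r, Fin (d r) := fun r => ⟨0, hd r⟩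

/-- index type for the "free" monomials: a block plus a nonzero index in it -/
abbrev nz : Type _ := Σ r : Fin k, {v : Fin (d r) // v ≠ base d hd r}

/-- the multi-indices giving algebraically independent Segre monomials -/
def uu : Option (nz d hd) → ∀ r, Fin (d r) := fun o =>
  o.elim (base d hd) (fun x => Function.update (base d hd) x.1 x.2.val)

lemma mexp_uu_apply (o : Option (nz d hd)) (x : nz d hd) :
    mexp d (uu d hd o) ⟨x.1, x.2.val⟩ = if o = some x then 1 else 0 := by
  rcases o with _ | y
  · rw [mexp_apply,
      if_neg (show ¬ (uu d hd none) x.1 = x.2.val from fun hc => x.2.2 hc.symm),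
      if_neg (by simp)]
  · rw [mexp_apply]
    show (if Function.update (base d hd) y.1 y.2.val x.1 = x.2.val then 1 else 0)
      = if some y = some x then 1 else 0
    by_cases h1 : y.1 = x.1
    · rcases y with ⟨ry, vy⟩
      rcases x with ⟨rx, vx⟩
      dsimp at h1
      subst h1
      rw [Function.update_self]
      by_cases h2 : vy = vx
      · subst h2; simp
      · rw [if_neg (fun hc => h2 (Subtype.ext hc)), if_neg]
        simp only [Option.some.injEq]
        intro hc
        exact h2 (eq_of_heq (Sigma.mk.inj_iff.mp hc).2)
    · rw [Function.update_of_ne (fun hc => h1 hc.symm),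
        if_neg (show ¬ (base d hd) x.1 = x.2.val from fun hc => x.2.2 hc.symm),
        if_neg (fun hc => h1 (congrArg Sigma.fst (Option.some.inj hc)))]

lemma tau_inj (hk : 1 ≤ k) :
    Function.Injective (fun a : Option (nz d hd) → ℕ =>
      ∑ o, a o • mexp d (uu d hd o)) := by
  classical
  intro a a' h
  have h0 : ∑ o, a o • mexp d (uu d hd o) = ∑ o, a' o • mexp d (uu d hd o) := h
  have hsome : ∀ x : nz d hd, a (some x) = a' (some x) := by
    intro x
    have h1 := congrArg (fun F : (Σ r : Fin k, Fin (d r)) →₀ ℕ => F ⟨x.1, x.2.val⟩) h0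
    simp only [Finsupp.finset_sum_apply, Finsupp.smul_apply, smul_eq_mul,
      mexp_uu_apply d hd, mul_ite, mul_one, mul_zero] at h1
    rwa [Finset.sum_ite_eq' univ (some x) a, Finset.sum_ite_eq' univ (some x) a',
      if_pos (Finset.mem_univ _), if_pos (Finset.mem_univ _)] at h1
  have e : ∀ (b : Option (nz d hd) → ℕ),
      Finsupp.weight (wt d) (∑ o, b o • mexp d (uu d hd o)) ⟨0, hk⟩ = ∑ o, b o := by
    intro b
    rw [map_sum, Finset.sum_apply]
    refine Finset.sum_congr rfl fun o _ => ?_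
    rw [map_nsmul, Pi.smul_apply, weight_mexp d]
    simp
  have hsum : ∑ o, a o = ∑ o, a' o := by rw [← e a, ← e a', h0]
  funext o
  rcases o with _ | x
  · rw [Fintype.sum_option, Fintype.sum_option] at hsum
    have h2 : ∑ x : nz d hd, a (some x) = ∑ x : nz d hd, a' (some x) :=
      Finset.sum_congr rfl fun x _ => hsome x
    omega
  · exact hsome x

lemma G_mem_Wp (a : Option (nz d hd) → ℕ) :
    (monomial (∑ o, a o • mexp d (uu d hd o)) (1:ℂ)) ∈ Wp d (∑ o, a o) := by
  classical
  set g : Multiset (∀ r, Fin (d r)) := ∑ o, Multiset.replicate (a o) (uu d hd o) with hg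
  have hcard : Multiset.card g = ∑ o, a o := by
    rw [hg, multiset_card_finset_sum]
    exact Finset.sum_congr rfl fun o _ => Multiset.card_replicate _ _
  have hmexp : (g.map (mexp d)).sum = ∑ o, a o • mexp d (uu d hd o) := by
    rw [hg, multiset_map_finset_sum, multiset_sum_finset_sum]
    refine Finset.sum_congr rfl fun o _ => ?_
    rw [Multiset.map_replicate, Multiset.sum_replicate]
  have h1 : (g.map (tmon d)).prod = monomial (∑ o, a o • mexp d (uu d hd o)) (1:ℂ) := by
    rw [multiset_tmon_prod, hmexp]
  rw [← h1]
  exact gen_mem_Wp d g hcard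

lemma master (hk : 1 ≤ k)
    (L : Fin c → MvPolynomial (Σ r : Fin k, Fin (d r)) ℂ)
    (hL : ∀ b, IsWeightedHomogeneous (wt d) (L b) (fun _ => 1))
    {N : ℕ} (hN : 1 ≤ N)
    (hmem : ∀ i, tmon d i ^ N ∈ Ideal.span (Set.range L))
    (hc : c + 1 ≤ Fintype.card (Option (nz d hd))) : False := by
  classical
  set D := Fintype.card (∀ r, Fin (d r)) with hD'
  have hD : 1 ≤ D := Fintype.card_pos_iff.mpr ⟨base d hd⟩
  set M₀ := D * (N - 1) with hM₀
  set m := Fintype.card (Option (nz d hd)) with hm'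
  have hm : 1 ≤ m := Fintype.card_pos_iff.mpr ⟨none⟩
  set g₀ := (M₀ + 1) ^ D with hg₀
  have hg₀pos : 1 ≤ g₀ := Nat.one_le_pow _ _ (by omega)
  set P := m ^ c * g₀ with hP
  have hPpos : 1 ≤ P := Nat.one_le_iff_ne_zero.mpr (by positivity)
  set Q := m * P with hQ
  have hdes := descent d L hN hD (fun i => exists_homog_cert d L hL hN i (hmem i))
  set F : (Fin c → Fin (Q+1)) × ((∀ r, Fin (d r)) → Fin (M₀+1)) →
      MvPolynomial (Σ r : Fin k, Fin (d r)) ℂ :=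
    fun bg => (∏ b, L b ^ ((bg.1 b : ℕ))) * ∏ i, tmon d i ^ ((bg.2 i : ℕ)) with hF
  have hUspan : Usp d L M₀ Q ≤ Submodule.span ℂ (Set.range F) := by
    rw [Usp, Submodule.span_le]
    rintro f ⟨mβ, g, h1, h2, rfl⟩
    have e1 : (mβ.map L).prod = ∏ b : Fin c, L b ^ (Multiset.count b mβ) := by
      rw [Finset.prod_multiset_map_count]
      exact Finset.prod_subset (Finset.subset_univ _) (fun b _ hb => by
        rw [Multiset.count_eq_zero.mpr (fun hmm => hb (Multiset.mem_toFinset.mpr hmm)), pow_zero])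
    have e2 : (g.map (tmon d)).prod = ∏ i : (∀ r, Fin (d r)), tmon d i ^ (Multiset.count i g) := by
      rw [Finset.prod_multiset_map_count]
      exact Finset.prod_subset (Finset.subset_univ _) (fun i _ hi => by
        rw [Multiset.count_eq_zero.mpr (fun hmm => hi (Multiset.mem_toFinset.mpr hmm)), pow_zero])
    refine Submodule.subset_span ⟨⟨fun b => ⟨Multiset.count b mβ, ?_⟩,
      fun i => ⟨Multiset.count i g, ?_⟩⟩, ?_⟩
    · have := (Multiset.count_le_card b mβ); omega
    · have := (Multiset.count_le_card i g); omega
    · rw [hF]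
      show (∏ b : Fin c, L b ^ (Multiset.count b mβ))
          * (∏ i : (∀ r, Fin (d r)), tmon d i ^ (Multiset.count i g))
        = (mβ.map L).prod * (g.map (tmon d)).prod
      rw [e1, e2]
  haveI : FiniteDimensional ℂ (Submodule.span ℂ (Set.range F)) :=
    FiniteDimensional.span_of_finite ℂ (Set.finite_range F)
  set τ : (Option (nz d hd) → Fin (P+1)) → ((Σ r : Fin k, Fin (d r)) →₀ ℕ) :=
    fun a => ∑ o, ((a o : ℕ)) • mexp d (uu d hd o) with hτ
  set G : (Option (nz d hd) → Fin (P+1)) → MvPolynomial (Σ r : Fin k, Fin (d r)) ℂ :=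
    fun a => monomial (τ a) 1 with hG
  have hτinj : Function.Injective τ := by
    intro a a' h
    have h2 := tau_inj d hd hk (show (∑ o, ((a o : ℕ)) • mexp d (uu d hd o))
        = ∑ o, ((a' o : ℕ)) • mexp d (uu d hd o) from h)
    funext o
    exact Fin.ext (congrFun h2 o)
  have hGind : LinearIndependent ℂ G := by
    have h1 : G = (⇑(MvPolynomial.basisMonomials (Σ r : Fin k, Fin (d r)) ℂ)) ∘ τ := by
      funext a
      rw [hG, Function.comp_apply, coe_basisMonomials]
    rw [h1]
    exact (MvPolynomial.basisMonomials _ ℂ).linearIndependent.comp τ hτinj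
  have hGmem : ∀ a, G a ∈ Submodule.span ℂ (Set.range F) := by
    intro a
    have h1 : G a ∈ Wp d (∑ o, ((a o : ℕ))) := G_mem_Wp d hd _
    have h3 : (∑ o, ((a o : ℕ))) ≤ Q := by
      calc ∑ o, ((a o : ℕ)) ≤ ∑ _o : Option (nz d hd), P :=
            Finset.sum_le_sum fun o _ => Nat.lt_succ_iff.mp (a o).isLt
        _ = m * P := by rw [Finset.sum_const, smul_eq_mul, Finset.card_univ, hm']
    exact hUspan (Usp_mono d L M₀ h3 (hdes _ h1))
  set G' : (Option (nz d hd) → Fin (P+1)) → (Submodule.span ℂ (Set.range F)) :=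
    fun a => ⟨G a, hGmem a⟩ with hG'
  have hG'ind : LinearIndependent ℂ G' := by
    apply LinearIndependent.of_comp (Submodule.span ℂ (Set.range F)).subtype
    exact hGind
  have hcard1 := hG'ind.fintype_card_le_finrank
  have hcard2 : Module.finrank ℂ (Submodule.span ℂ (Set.range F))
      ≤ Fintype.card ((Fin c → Fin (Q+1)) × ((∀ r, Fin (d r)) → Fin (M₀+1))) := by
    calc Module.finrank ℂ (Submodule.span ℂ (Set.range F)) ≤ (Set.range F).toFinset.card :=
          finrank_span_le_card _
      _ = (Finset.univ.image F).card := by rw [Set.toFinset_range]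
      _ ≤ Finset.univ.card := Finset.card_image_le
      _ = _ := Finset.card_univ
  have key : (P+1)^m ≤ (Q+1)^c * (M₀+1)^D := by
    have h1 := le_trans hcard1 hcard2
    simp only [Fintype.card_fun, Fintype.card_fin, Fintype.card_prod] at h1
    rwa [← hm', ← hD'] at h1
  have hQ1 : Q + 1 ≤ m * (P+1) := by rw [hQ, mul_add, mul_one]; omega
  have h5 : (Q+1)^c ≤ m^c * (P+1)^c := by
    rw [← mul_pow]; exact Nat.pow_le_pow_left hQ1 c
  have h6 : (P+1)^m ≤ P * (P+1)^c := by
    calc (P+1)^m ≤ (Q+1)^c * g₀ := key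
      _ ≤ (m^c * (P+1)^c) * g₀ := Nat.mul_le_mul_right _ h5
      _ = (m^c * g₀) * (P+1)^c := by ring
      _ = P * (P+1)^c := by rw [hP]
  have h8 : P * (P+1)^c < (P+1)^(c+1) := by
    rw [pow_succ, mul_comm ((P+1)^c) (P+1)]
    exact Nat.mul_lt_mul_of_lt_of_le (by omega) le_rfl (by positivity)
  have h9 : (P+1)^(c+1) ≤ (P+1)^m := Nat.pow_le_pow_right (by omega) (by omega)
  omega

/-- the linear forms rewritten in the Segre monomials -/
noncomputable def Lform (wv : Fin c → (∀ r, Fin (d r)) → ℂ) (b : Fin c) :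
    MvPolynomial (Σ r : Fin k, Fin (d r)) ℂ :=
  ∑ i, MvPolynomial.C (wv b i) * tmon d i

lemma Lform_homog (wv : Fin c → (∀ r, Fin (d r)) → ℂ) (b : Fin c) :
    IsWeightedHomogeneous (wt d) (Lform d wv b) (fun _ => 1) := by
  apply IsWeightedHomogeneous.sum
  intro i _
  rw [tmon, MvPolynomial.C_mul_monomial, mul_one]
  exact isWeightedHomogeneous_monomial _ _ _ (weight_mexp d i)

/-- Nullstellensatz: if the only product vector killed by all the linear functionals is `0`,
then a power of every Segre monomial lies in the ideal generated by the linear forms. -/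
lemma exists_power (hk : 0 < k) (wv : Fin c → (∀ r, Fin (d r)) → ℂ)
    (hzero : ∀ v : (∀ r, Fin (d r)) → ℂ,
      (∃ x : ∀ r, Fin (d r) → ℂ, ∀ i, v i = ∏ r, x r (i r)) →
      (∀ b, ∑ i, wv b i * v i = 0) → v = 0) :
    ∃ N : ℕ, 1 ≤ N ∧ ∀ i, tmon d i ^ N ∈ Ideal.span (Set.range (Lform d wv)) := by
  classical
  set Qs : Set (MvPolynomial (∀ r, Fin (d r)) ℂ) :=
    {q | ∃ (i j : ∀ r, Fin (d r)) (r : Fin k), q = X i * X j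
      - X (Function.update i r (j r)) * X (Function.update j r (i r))} with hQs
  set ℓ : Fin c → MvPolynomial (∀ r, Fin (d r)) ℂ :=
    fun b => ∑ i, MvPolynomial.C (wv b i) * X i with hℓ
  set J : Ideal (MvPolynomial (∀ r, Fin (d r)) ℂ) := Ideal.span (Qs ∪ Set.range ℓ) with hJ
  -- the zero locus of J is trivial
  have hZ : MvPolynomial.zeroLocus ℂ J ⊆ {0} := by
    intro v hv
    have hq : ∀ i j (r : Fin k), v i * v j
        = v (Function.update i r (j r)) * v (Function.update j r (i r)) := by
      intro i j r
      have h1 : (X i * X j - X (Function.update i r (j r)) * X (Function.update j r (i r))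
          : MvPolynomial (∀ r, Fin (d r)) ℂ) ∈ J :=
        Ideal.subset_span (Set.mem_union_left _ ⟨i, j, r, rfl⟩)
      have h2 := hv _ h1
      rw [map_sub, map_mul, map_mul, MvPolynomial.aeval_X, MvPolynomial.aeval_X,
        MvPolynomial.aeval_X, MvPolynomial.aeval_X, sub_eq_zero] at h2
      exact h2
    have hb : ∀ b, ∑ i, wv b i * v i = 0 := by
      intro b
      have h1 : ℓ b ∈ J := Ideal.subset_span (Set.mem_union_right _ ⟨b, rfl⟩)
      have h2 := hv _ h1
      rw [hℓ] at h2
      simpa using h2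
    have hrep := exists_product_rep d hk v hq
    exact hzero v hrep hb
  -- conclude via the Nullstellensatz
  have hrad : ∀ i, (X i : MvPolynomial (∀ r, Fin (d r)) ℂ) ∈ J.radical := by
    intro i
    rw [← MvPolynomial.vanishingIdeal_zeroLocus_eq_radical (K := ℂ)]
    intro v hv
    have : v = 0 := hZ hv
    subst this
    simp
  have hpow : ∀ i : (∀ r, Fin (d r)), ∃ n, (X i : MvPolynomial (∀ r, Fin (d r)) ℂ) ^ n ∈ J :=
    fun i => hrad i
  set nf : (∀ r, Fin (d r)) → ℕ := fun i => Classical.choose (hpow i) with hnf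
  set N : ℕ := 1 + Finset.univ.sup nf with hN
  have hNi : ∀ i, (X i : MvPolynomial (∀ r, Fin (d r)) ℂ) ^ N ∈ J := by
    intro i
    have h1 : nf i ≤ N := by
      rw [hN]
      have := Finset.le_sup (Finset.mem_univ i) (f := nf)
      omega
    have h2 : (X i : MvPolynomial (∀ r, Fin (d r)) ℂ) ^ N
        = X i ^ (N - nf i) * X i ^ (nf i) := by
      rw [← pow_add]
      congr 1
      omega
    rw [h2]
    exact Ideal.mul_mem_left _ _ (Classical.choose_spec (hpow i))
  -- transfer through the substitution Y i ↦ tmon i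
  set φ : MvPolynomial (∀ r, Fin (d r)) ℂ →ₐ[ℂ] MvPolynomial (Σ r : Fin k, Fin (d r)) ℂ :=
    MvPolynomial.aeval (tmon d) with hφ
  refine ⟨N, by omega, fun i => ?_⟩
  have h1 : φ (X i ^ N) ∈ Ideal.map φ J := Ideal.mem_map_of_mem _ (hNi i)
  have h2 : Ideal.map φ J ≤ Ideal.span (Set.range (Lform d wv)) := by
    rw [hJ, Ideal.map_span, Ideal.span_le]
    rintro f ⟨q, hq, rfl⟩
    rcases hq with hq | ⟨b, rfl⟩
    · obtain ⟨i', j', r', rfl⟩ := hq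
      have : φ (X i' * X j'
          - X (Function.update i' r' (j' r')) * X (Function.update j' r' (i' r'))) = 0 := by
        rw [map_sub, map_mul, map_mul, hφ, MvPolynomial.aeval_X, MvPolynomial.aeval_X,
          MvPolynomial.aeval_X, MvPolynomial.aeval_X, tmon_swap d i' j' r', sub_self]
      rw [this]
      exact Ideal.zero_mem _
    · have : φ (ℓ b) = Lform d wv b := by
        rw [hℓ, map_sum, Lform]
        refine Finset.sum_congr rfl fun i' _ => ?_
        rw [map_mul, hφ, MvPolynomial.aeval_X, MvPolynomial.aeval_C]
        rfl
      rw [this]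
      exact Ideal.subset_span ⟨b, rfl⟩
  have h3 : φ (X i ^ N) = tmon d i ^ N := by
    rw [map_pow, hφ, MvPolynomial.aeval_X]
  rw [← h3]
  exact h2 h1

end Counting

end Wallach

open Wallach in
/-- Wallach's bound: a subspace of `ℂ^{d₁} ⊗ ⋯ ⊗ ℂ^{d_k}` containing no nonzero product
vector has dimension at most `d₁⋯d_k − (d₁+⋯+d_k) + k − 1`. -/
theorem stmt_15 (k : ℕ) (hk : 2 ≤ k) (d : Fin k → ℕ) (hd : ∀ r, 2 ≤ d r)
    (E : Submodule ℂ (EuclideanSpace ℂ (∀ r, Fin (d r))))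
    (hE : ∀ v ∈ E,
      (∃ x : ∀ r, Fin (d r) → ℂ, ∀ i : ∀ r, Fin (d r), v i = ∏ r, x r (i r)) → v = 0) :
    Module.finrank ℂ E ≤ (∏ r, d r) - (∑ r, d r) + k - 1 := by
  classical
  by_contra hcon
  push_neg at hcon
  have hd1 : ∀ r, 1 ≤ d r := fun r => le_trans (by norm_num) (hd r)
  have hk1 : 0 < k := by omega
  set Qt := EuclideanSpace ℂ (∀ r, Fin (d r)) ⧸ E with hQt
  set c := Module.finrank ℂ Qt with hc'
  have hfinV : Module.finrank ℂ (EuclideanSpace ℂ (∀ r, Fin (d r))) = ∏ r, d r := by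
    rw [finrank_euclideanSpace, Fintype.card_pi]
    exact Finset.prod_congr rfl fun r _ => Fintype.card_fin _
  have hsum : c + Module.finrank ℂ E = ∏ r, d r := by
    rw [← hfinV]; exact Submodule.finrank_quotient_add_finrank E
  set B := (Module.finBasis ℂ Qt).dualBasis with hB
  set eqv := (WithLp.linearEquiv 2 ℂ ((∀ r, Fin (d r)) → ℂ)).symm with heqv
  set f : Fin c → ((∀ r, Fin (d r)) → ℂ) →ₗ[ℂ] ℂ :=
    fun b => ((B b).comp E.mkQ).comp eqv.toLinearMap with hf
  set wv : Fin c → (∀ r, Fin (d r)) → ℂ :=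
    fun b i => f b (fun j => if i = j then 1 else 0) with hwv
  have hmem : ∀ v : (∀ r, Fin (d r)) → ℂ, (∀ b, ∑ i, wv b i * v i = 0) → eqv v ∈ E := by
    intro v hv
    have hfb : ∀ b, f b v = 0 := by
      intro b
      rw [LinearMap.pi_apply_eq_sum_univ (f b) v,
        Finset.sum_congr rfl (fun i _ => by rw [smul_eq_mul, mul_comm])]
      exact hv b
    have hall : ∀ ψ : Module.Dual ℂ Qt, ψ (E.mkQ (eqv v)) = 0 := by
      intro ψ
      rw [← B.sum_repr ψ]
      rw [LinearMap.coe_sum, Finset.sum_apply]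
      refine Finset.sum_eq_zero fun b _ => ?_
      rw [LinearMap.smul_apply]
      have h0 : B b (E.mkQ (eqv v)) = 0 := hfb b
      rw [h0, smul_zero]
    have h0 : E.mkQ (eqv v) = 0 := (Module.forall_dual_apply_eq_zero_iff ℂ _).mp hall
    rwa [Submodule.mkQ_apply, Submodule.Quotient.mk_eq_zero] at h0
  have hzero : ∀ v : (∀ r, Fin (d r)) → ℂ,
      (∃ x : ∀ r, Fin (d r) → ℂ, ∀ i, v i = ∏ r, x r (i r)) →
      (∀ b, ∑ i, wv b i * v i = 0) → v = 0 := by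
    intro v hx hv
    have h1 := hE (eqv v) (hmem v hv) hx
    exact (LinearEquiv.map_eq_zero_iff eqv).mp h1
  obtain ⟨N, hN, hpow⟩ := exists_power d hk1 wv hzero
  have hcard : Fintype.card (Option (nz d hd1)) = (∑ r, (d r - 1)) + 1 := by
    rw [Fintype.card_option, Fintype.card_sigma]
    congr 1
    refine Finset.sum_congr rfl fun r _ => ?_
    rw [Fintype.card_subtype_compl, Fintype.card_subtype_eq, Fintype.card_fin]
  have hS : (∑ r, (d r - 1)) + k = ∑ r, d r := by
    calc (∑ r, (d r - 1)) + k = (∑ r, (d r - 1)) + ∑ _r : Fin k, 1 := by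
          rw [Finset.sum_const, smul_eq_mul, mul_one, Finset.card_univ, Fintype.card_fin]
      _ = ∑ r, ((d r - 1) + 1) := (Finset.sum_add_distrib).symm
      _ = ∑ r, d r := Finset.sum_congr rfl fun r _ => by have := hd r; omega
  have hcle : c + 1 ≤ Fintype.card (Option (nz d hd1)) := by
    rw [hcard]
    omega
  exact master d hd1 (by omega) (Lform d wv) (Lform_homog d wv) hN hpow hcle
end

section
/- A nonzero vector w ∈ T is a product vector if and only if either w = c · v_λ for some nonzero c ∈ ℂ and some λ ∈ ℂ, where v_λ ∈ H has coordinates v_λ(i) = λ^{∑_{r=1}^k i_r}, or w = c · e_{i*} for some nonzero c ∈ ℂ, where i* ∈ I is the tuple with i*_r = d_r − 1 for every r. -/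
/-!
Membership in `T` means `w i = a (level i)` for a sequence `a`, where `level i = ∑ r, i r`.
For a product vector, exchanging one coordinate between two index tuples `i`, `j` preserves
`w i * w j`. With `k ≥ 2` parties and all `d r ≥ 2`, such exchanges turn the levels `(m, m)`
into `(m - 1, m + 1)` for every interior `m`, and `(0, N)` into an interior pair `(p, N - p)`.
Hence `a m ^ 2 = a (m - 1) * a (m + 1)` and `a 0 * a N = a p * a (N - p)`. If some interior
`a m` is nonzero, all terms are and `a` is geometric, so `w = a 0 • v_λ`; otherwise one of `a 0`,
`a N` vanishes as well, giving `w = a 0 • v_0` or `w = a N • e_{i*}`.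
-/

open Finset Function

section Level

variable {ι : Type*} [Fintype ι] {d : ι → ℕ}

def level (i : ∀ r, Fin (d r)) : ℕ := ∑ r, (i r : ℕ)

lemma level_le (i : ∀ r, Fin (d r)) : level i ≤ ∑ r, (d r - 1) :=
  sum_le_sum fun r _ => Nat.le_sub_one_of_lt (i r).isLt

lemma level_update_add [DecidableEq ι] (i : ∀ r, Fin (d r)) (r : ι) (c : Fin (d r)) :
    level (update i r c) + i r = level i + c := by
  simp only [level, apply_update (fun s (j : Fin (d s)) => (j : ℕ)),
    sum_update_of_mem (mem_univ r)]
  rw [← add_sum_erase _ _ (mem_univ r), sdiff_singleton_eq_erase]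
  ring

lemma level_eq_iff_eq {istar : ∀ r, Fin (d r)} (histar : ∀ r, (istar r : ℕ) = d r - 1)
    {i : ∀ r, Fin (d r)} : level i = ∑ r, (d r - 1) ↔ i = istar := by
  refine ⟨fun hi => ?_, fun hi => hi ▸ sum_congr rfl fun r _ => histar r⟩
  have hcoord := (sum_eq_sum_iff_of_le fun r _ => Nat.le_sub_one_of_lt (i r).isLt).1 hi
  exact funext fun r => Fin.ext ((hcoord r (mem_univ r)).trans (histar r).symm)

lemma exists_lt_of_level_lt {i : ∀ r, Fin (d r)} (h : level i < ∑ r, (d r - 1)) :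
    ∃ r, (i r : ℕ) + 1 < d r := by
  by_contra! hi
  exact h.not_ge (sum_le_sum fun r _ => by have := hi r; omega)

lemma exists_level_eq [DecidableEq ι] (hd : ∀ r, 0 < d r) {m : ℕ}
    (hm : m ≤ ∑ r, (d r - 1)) : ∃ i : ∀ r, Fin (d r), level i = m := by
  induction m with
  | zero => exact ⟨fun r => ⟨0, hd r⟩, by simp [level]⟩
  | succ m ih =>
    obtain ⟨i, rfl⟩ := ih (by omega)
    obtain ⟨r, hr⟩ := exists_lt_of_level_lt (i := i) (by omega)
    refine ⟨update i r ⟨i r + 1, hr⟩, ?_⟩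
    have := level_update_add i r ⟨i r + 1, hr⟩
    simp only at this
    omega

lemma exists_level_eq_of_pos_of_lt [DecidableEq ι] [Nontrivial ι] (hd : ∀ r, 2 ≤ d r) {m : ℕ}
    (h0 : 0 < m) (hm : m < ∑ r, (d r - 1)) :
    ∃ i : ∀ r, Fin (d r), level i = m ∧
      ∃ r s, r ≠ s ∧ (i r : ℕ) + 1 < d r ∧ 0 < (i s : ℕ) := by
  obtain ⟨i, rfl⟩ := exists_level_eq (fun r => by have := hd r; omega) hm.le
  obtain ⟨r, hr⟩ := exists_lt_of_level_lt hm
  refine ⟨i, rfl, ?_⟩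
  by_cases hs : ∃ s, s ≠ r ∧ 0 < (i s : ℕ)
  · obtain ⟨s, hsr, hs⟩ := hs
    exact ⟨r, s, hsr.symm, hr, hs⟩
  · push Not at hs
    obtain ⟨s, hsr⟩ := exists_ne r
    have hir : level i = i r :=
      sum_eq_single r (fun s _ hsr => by have := hs s hsr; omega) (by simp)
    have := hs s hsr
    have := hd s
    exact ⟨s, r, hsr, by omega, by omega⟩

end Level

lemma prod_mul_prod_eq_prod_update_mul_prod_update {ι M : Type*} [Fintype ι] [DecidableEq ι]
    [CommMonoid M] {κ : ι → Type*} (x : ∀ r, κ r → M) (i j : ∀ r, κ r) (r : ι) :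
    (∏ s, x s (i s)) * ∏ s, x s (j s) =
      (∏ s, x s (update i r (j r) s)) * ∏ s, x s (update j r (i r) s) := by
  rw [← prod_mul_distrib, ← prod_mul_distrib]
  refine prod_congr rfl fun s _ => ?_
  rcases eq_or_ne s r with rfl | h
  · simp [mul_comm]
  · simp [update_of_ne h]

section ProductOnLevels

variable {ι M : Type*} [Fintype ι] [DecidableEq ι] [CommMonoid M] {d : ι → ℕ}
  {x : ∀ r, Fin (d r) → M} {a : ℕ → M}

lemma sq_eq_mul_of_prod [Nontrivial ι] (hd : ∀ r, 2 ≤ d r)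
    (hax : ∀ i, a (level i) = ∏ r, x r (i r)) {m : ℕ} (h0 : 0 < m)
    (hm : m < ∑ r, (d r - 1)) : a m ^ 2 = a (m - 1) * a (m + 1) := by
  obtain ⟨i, rfl, r, s, hrs, hr, hs⟩ := exists_level_eq_of_pos_of_lt hd h0 hm
  have hdown_r : update i s ⟨i s - 1, by omega⟩ r = i r := update_of_ne hrs _ _
  have hup : level (update i r ⟨i r + 1, hr⟩) = level i + 1 := by
    have := level_update_add i r ⟨i r + 1, hr⟩
    simp only at this
    omega
  have hdown : level (update i s ⟨i s - 1, by omega⟩) = level i - 1 := by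
    have := level_update_add i s ⟨i s - 1, by omega⟩
    simp only at this
    omega
  have hmid : level (update (update i s ⟨i s - 1, by omega⟩) r ⟨i r + 1, hr⟩) = level i := by
    have := level_update_add (update i s ⟨i s - 1, by omega⟩) r ⟨i r + 1, hr⟩
    simp only [hdown_r] at this
    omega
  have key := prod_mul_prod_eq_prod_update_mul_prod_update x
    (update i r ⟨i r + 1, hr⟩) (update i s ⟨i s - 1, by omega⟩) r
  rw [hdown_r, update_idem, update_eq_self, update_self, ← hax, ← hax, ← hax, ← hax, hup, hdown,
    hmid] at key
  rw [sq, ← key, mul_comm]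

lemma exists_mul_eq_mul_of_prod [Nontrivial ι] (hd : ∀ r, 2 ≤ d r)
    (hax : ∀ i, a (level i) = ∏ r, x r (i r)) :
    ∃ p, 0 < p ∧ p < ∑ r, (d r - 1) ∧
      a 0 * a (∑ r, (d r - 1)) = a p * a (∑ r, (d r - 1) - p) := by
  obtain ⟨r, s, hrs⟩ := exists_pair_ne ι
  obtain ⟨bot, hbot⟩ : ∃ bot : ∀ r, Fin (d r), ∀ r, (bot r : ℕ) = 0 :=
    ⟨fun r => ⟨0, by have := hd r; omega⟩, fun _ => rfl⟩
  obtain ⟨top, htop⟩ : ∃ top : ∀ r, Fin (d r), ∀ r, (top r : ℕ) = d r - 1 :=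
    ⟨fun r => ⟨d r - 1, by have := hd r; omega⟩, fun _ => rfl⟩
  have hbot_level : level bot = 0 := by simp [level, hbot]
  have htop_level : level top = ∑ r, (d r - 1) := (level_eq_iff_eq htop).2 rfl
  have h1 : level (update bot r (top r)) = d r - 1 := by
    have := level_update_add bot r (top r)
    rw [hbot, htop, hbot_level] at this
    omega
  have h2 : level (update top r (bot r)) = ∑ r, (d r - 1) - (d r - 1) := by
    have := level_update_add top r (bot r)
    rw [hbot, htop, htop_level] at this
    omega
  have hrs_le : (d r - 1) + (d s - 1) ≤ ∑ r, (d r - 1) := by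
    rw [← sum_pair (f := fun r => d r - 1) hrs]
    exact sum_le_sum_of_subset (subset_univ _)
  have key := prod_mul_prod_eq_prod_update_mul_prod_update x bot top r
  rw [← hax, ← hax, ← hax, ← hax, hbot_level, htop_level, h1, h2] at key
  have := hd r
  have := hd s
  exact ⟨d r - 1, by omega, by omega, key⟩

end ProductOnLevels

section Sequence

variable {K : Type*} {a : ℕ → K} {N : ℕ}

lemma ne_zero_of_sq_eq_mul [MonoidWithZero K] [NoZeroDivisors K]
    (hgeo : ∀ m, 0 < m → m < N → a m ^ 2 = a (m - 1) * a (m + 1))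
    {m₀ : ℕ} (h0 : 0 < m₀) (hN : m₀ < N) (ha : a m₀ ≠ 0) {m : ℕ} (hm : m ≤ N) : a m ≠ 0 := by
  have hstep : ∀ m, 0 < m → m < N → a m ≠ 0 → a (m - 1) ≠ 0 ∧ a (m + 1) ≠ 0 :=
    fun m h0 hN ha => mul_ne_zero_iff.1 (hgeo m h0 hN ▸ pow_ne_zero 2 ha)
  have hup : ∀ j, m₀ + j ≤ N → a (m₀ + j) ≠ 0 := by
    intro j
    induction j with
    | zero => exact fun _ => ha
    | succ j ih => exact fun hj => (hstep _ (by omega) (by omega) (ih (by omega))).2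
  have hdown : ∀ j ≤ m₀, a (m₀ - j) ≠ 0 := by
    intro j
    induction j with
    | zero => exact fun _ => ha
    | succ j ih => exact fun hj => Nat.sub_sub m₀ j 1 ▸ (hstep _ (by omega) (by omega) (ih (by omega))).1
  rcases le_total m₀ m with h | h
  · obtain ⟨j, rfl⟩ := Nat.exists_eq_add_of_le h
    exact hup j hm
  · simpa [Nat.sub_sub_self h] using hdown (m₀ - m) (Nat.sub_le _ _)

lemma eq_mul_pow_of_sq_eq_mul [Field K]
    (hgeo : ∀ m, 0 < m → m < N → a m ^ 2 = a (m - 1) * a (m + 1))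
    (hne : ∀ m < N, a m ≠ 0) {m : ℕ} (hm : m ≤ N) : a m = a 0 * (a 1 / a 0) ^ m := by
  induction m using Nat.strong_induction_on with
  | _ m ih =>
    match m with
    | 0 => simp
    | 1 => rw [pow_one, mul_div_cancel₀ _ (hne 0 (by omega))]
    | m + 2 =>
      refine mul_left_cancel₀ (hne m (by omega)) ?_
      calc a m * a (m + 2) = a (m + 1) ^ 2 := (hgeo (m + 1) (by omega) (by omega)).symm
        _ = a m * (a 0 * (a 1 / a 0) ^ (m + 2)) := by
          rw [ih (m + 1) (by omega) (by omega), ih m (by omega) (by omega)]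
          ring

lemma exists_eq_mul_pow_or_eq_zero [Field K]
    (hgeo : ∀ m, 0 < m → m < N → a m ^ 2 = a (m - 1) * a (m + 1))
    (hends : ∃ p, 0 < p ∧ p < N ∧ a 0 * a N = a p * a (N - p)) :
    (∃ c, ∀ m ≤ N, a m = a 0 * c ^ m) ∨ ∀ m < N, a m = 0 := by
  by_cases hmid : ∃ m, 0 < m ∧ m < N ∧ a m ≠ 0
  · obtain ⟨m₀, h0, hN, ha⟩ := hmid
    exact .inl ⟨_, fun m hm => eq_mul_pow_of_sq_eq_mul hgeo
      (fun m' hm' => ne_zero_of_sq_eq_mul hgeo h0 hN ha hm'.le) hm⟩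
  push Not at hmid
  obtain ⟨p, hp0, hpN, hp⟩ := hends
  rw [hmid p hp0 hpN, zero_mul, mul_eq_zero] at hp
  rcases hp with h0 | hN
  · refine .inr fun m hm => ?_
    rcases m.eq_zero_or_pos with rfl | hm0
    exacts [h0, hmid m hm0 hm]
  · refine .inl ⟨0, fun m hm => ?_⟩
    rcases m.eq_zero_or_pos with rfl | hm0
    · simp
    rw [zero_pow hm0.ne', mul_zero]
    rcases hm.lt_or_eq with hlt | rfl
    exacts [hmid m hm0 hlt, hN]

end Sequence


section ProductVector

variable {ι : Type*} [Fintype ι] {d : ι → ℕ}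

def IsProductVector (w : EuclideanSpace ℂ (∀ r, Fin (d r))) : Prop :=
  ∃ x : ∀ r, Fin (d r) → ℂ, ∀ i, w i = ∏ r, x r (i r)

lemma IsProductVector.smul [DecidableEq ι] [Nonempty ι] {w : EuclideanSpace ℂ (∀ r, Fin (d r))}
    (hw : IsProductVector w) (c : ℂ) : IsProductVector (c • w) := by
  obtain ⟨x, hx⟩ := hw
  obtain ⟨r₀⟩ := ‹Nonempty ι›
  refine ⟨fun r j => (if r = r₀ then c else 1) * x r j, fun i => ?_⟩
  rw [prod_mul_distrib, prod_ite_eq', ← hx i]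
  simp

lemma isProductVector_of_apply_eq_pow {v : EuclideanSpace ℂ (∀ r, Fin (d r))} {lam : ℂ}
    (hv : ∀ i, v i = lam ^ level i) : IsProductVector v :=
  ⟨fun _ j => lam ^ (j : ℕ), fun i => by rw [hv, level, prod_pow_eq_pow_sum]⟩

lemma isProductVector_single [DecidableEq (∀ r, Fin (d r))] (istar : ∀ r, Fin (d r)) :
    IsProductVector (EuclideanSpace.single istar (1 : ℂ)) :=
  ⟨fun r j => if j = istar r then 1 else 0, fun i => by
    simp [PiLp.single_apply, prod_ite_zero, funext_iff]⟩

lemma exists_apply_eq_level_of_mem_span {S : Set ℕ} {u : ℕ → EuclideanSpace ℂ (∀ r, Fin (d r))}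
    (hu : ∀ n i, u n i = if level i = n then 1 else 0) {w : EuclideanSpace ℂ (∀ r, Fin (d r))}
    (hw : w ∈ Submodule.span ℂ (u '' S)) : ∃ a : ℕ → ℂ, ∀ i, w i = a (level i) := by
  induction hw using Submodule.span_induction with
  | mem _ h =>
    obtain ⟨n, -, rfl⟩ := h
    exact ⟨fun m => if m = n then 1 else 0, hu n⟩
  | zero => exact ⟨0, fun _ => rfl⟩
  | add _ _ _ _ hv hw =>
    obtain ⟨a, ha⟩ := hv
    obtain ⟨b, hb⟩ := hw
    exact ⟨a + b, fun i => by simp [ha, hb]⟩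
  | smul c _ _ hw =>
    obtain ⟨a, ha⟩ := hw
    exact ⟨c • a, fun i => by simp [ha]⟩

end ProductVector

/-- The nonzero product vectors in `T` are exactly the nonzero multiples of the
Vandermonde-type vectors `v_λ` (`λ ∈ ℂ`) and of `e_{i*}` where `i*_r = d_r − 1`. -/
theorem stmt_16 (k : ℕ) (hk : 2 ≤ k) (d : Fin k → ℕ) (hd : ∀ r, 2 ≤ d r)
    (u : ℕ → EuclideanSpace ℂ (∀ r, Fin (d r)))
    (hu : ∀ n, u n = ∑ i ∈ Finset.univ.filter
        (fun i : ∀ r, Fin (d r) => ∑ r, (i r : ℕ) = n),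
      EuclideanSpace.single i (1 : ℂ))
    (v : ℂ → EuclideanSpace ℂ (∀ r, Fin (d r)))
    (hv : ∀ lam : ℂ, v lam = ∑ i : ∀ r, Fin (d r),
      lam ^ (∑ r, (i r : ℕ)) • EuclideanSpace.single i (1 : ℂ))
    (istar : ∀ r, Fin (d r))
    (histar : ∀ r, (istar r : ℕ) = d r - 1)
    (w : EuclideanSpace ℂ (∀ r, Fin (d r)))
    (hwT : w ∈ Submodule.span ℂ (u '' Set.Iic (∑ r, (d r - 1))))
    (hw0 : w ≠ 0) :
    (∃ x : ∀ r, Fin (d r) → ℂ, ∀ i : ∀ r, Fin (d r), w i = ∏ r, x r (i r)) ↔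
      ((∃ c : ℂ, c ≠ 0 ∧ ∃ lam : ℂ, w = c • v lam) ∨
       (∃ c : ℂ, c ≠ 0 ∧ w = c • EuclideanSpace.single istar (1 : ℂ))) := by
  have : Nontrivial (Fin k) := Fin.nontrivial_iff_two_le.2 hk
  have hv_apply (lam : ℂ) (i : ∀ r, Fin (d r)) : v lam i = lam ^ level i := by
    simp [hv, level, Pi.single_apply]
  obtain ⟨a, ha⟩ := exists_apply_eq_level_of_mem_span
    -- `congr` identifies the two `Decidable` instances of `level i = n`
    (fun n i => by simp [hu, level]; congr) hwT
  change IsProductVector w ↔ _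
  constructor
  · rintro ⟨x, hx⟩
    have hax (i : ∀ r, Fin (d r)) : a (level i) = ∏ r, x r (i r) := (ha i).symm.trans (hx i)
    rcases exists_eq_mul_pow_or_eq_zero (fun _ => sq_eq_mul_of_prod hd hax)
      (exists_mul_eq_mul_of_prod hd hax) with ⟨c, hc⟩ | hlow
    · have hw : w = a 0 • v c := by
        ext i
        simp [ha, hv_apply, hc _ (level_le i)]
      exact .inl ⟨a 0, fun h => hw0 (by simp [hw, h]), c, hw⟩
    · have hw : w = a (∑ r, (d r - 1)) • EuclideanSpace.single istar (1 : ℂ) := by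
        ext i
        by_cases hi : i = istar
        · simp [ha, hi, (level_eq_iff_eq histar).2 rfl]
        · have := lt_of_le_of_ne (level_le i) (mt (level_eq_iff_eq histar).1 hi)
          simp [ha, hi, hlow _ this]
      exact .inr ⟨_, fun h => hw0 (by simp [hw, h]), hw⟩
  · rintro (⟨c, -, lam, rfl⟩ | ⟨c, -, rfl⟩)
    · exact (isProductVector_of_apply_eq_pow (hv_apply lam)).smul c
    · exact (isProductVector_single istar).smul c
end
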